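/- arXiv:1812.07651 — 7 statements merged into one kernel-verified Lean document; each statement's English description precedes it below -/
import Mathlib

section
/- Let r_1, ..., r_n be real numbers linearly independent over the rationals. Define P_0 = {1} and P_j = P_{j-1} ∪ (r_j + P_{j-1}) for 1 ≤ j ≤ n. Then the difference set P_n - P_n = {a - a' : a, a' ∈ P_n} has exactly 3^n elements. -/
open Pointwise

/-!
Adding `r_{j+1}` turns `P_j` into `P_j ∪ (r_{j+1} + P_j)`, whose difference set is
`D ∪ (r_{j+1} + D) ∪ (-r_{j+1} + D)` for `D = P_j - P_j`. Every element of `D` is an integer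
combination of `r_1, …, r_j`, so by linear independence no nonzero multiple of `r_{j+1}` is a
difference of two elements of `D`; hence the three pieces are disjoint and `|P_{j+1} - P_{j+1}|`
is three times `|D|`.
-/

section Translates

variable {G : Type*} [AddCommGroup G] [DecidableEq G]

theorem Finset.union_image_add_sub_self (A : Finset G) (t : G) :
    (A ∪ A.image (t + ·)) - (A ∪ A.image (t + ·)) =
      (A - A) ∪ (A - A).image (t + ·) ∪ (A - A).image (-t + ·) := by
  ext z
  simp only [Finset.mem_sub, Finset.mem_union, Finset.mem_image]
  constructor
  · rintro ⟨a, ha, b, hb, rfl⟩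
    rcases ha with ha | ⟨a, ha, rfl⟩ <;> rcases hb with hb | ⟨b, hb, rfl⟩
    · exact Or.inl (Or.inl ⟨a, ha, b, hb, rfl⟩)
    · exact Or.inr ⟨a - b, ⟨a, ha, b, hb, rfl⟩, by abel⟩
    · exact Or.inl (Or.inr ⟨a - b, ⟨a, ha, b, hb, rfl⟩, by abel⟩)
    · exact Or.inl (Or.inl ⟨a, ha, b, hb, by abel⟩)
  · rintro ((⟨a, ha, b, hb, rfl⟩ | ⟨_, ⟨a, ha, b, hb, rfl⟩, rfl⟩) | ⟨_, ⟨a, ha, b, hb, rfl⟩, rfl⟩)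
    · exact ⟨a, Or.inl ha, b, Or.inl hb, rfl⟩
    · exact ⟨t + a, Or.inr ⟨a, ha, rfl⟩, b, Or.inl hb, by abel⟩
    · exact ⟨a, Or.inl ha, t + b, Or.inr ⟨b, hb, rfl⟩, by abel⟩

theorem Finset.card_union_image_add_union_image_neg_add (D : Finset G) (t : G)
    (h : ∀ c : ℤ, c ≠ 0 → ∀ d ∈ D, c • t + d ∉ D) :
    (D ∪ D.image (t + ·) ∪ D.image (-t + ·)).card = 3 * D.card := by
  have hdisj₁ : Disjoint D (D.image (t + ·)) := by
    refine Finset.disjoint_left.2 fun z hz hz' => ?_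
    obtain ⟨d, hd, rfl⟩ := Finset.mem_image.1 hz'
    exact h 1 one_ne_zero d hd (by simpa using hz)
  have hdisj₂ : Disjoint (D ∪ D.image (t + ·)) (D.image (-t + ·)) := by
    refine Finset.disjoint_left.2 fun z hz hz' => ?_
    obtain ⟨d, hd, rfl⟩ := Finset.mem_image.1 hz'
    rcases Finset.mem_union.1 hz with hz | hz
    · exact h (-1) (by norm_num) d hd (by simpa using hz)
    · obtain ⟨d', hd', hdd'⟩ := Finset.mem_image.1 hz
      refine h 2 two_ne_zero d' hd' ?_
      convert hd using 1
      rw [← add_left_cancel_iff (a := -t), ← hdd']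
      abel
  rw [Finset.card_union_of_disjoint hdisj₂, Finset.card_union_of_disjoint hdisj₁,
    Finset.card_image_of_injective _ (add_right_injective t),
    Finset.card_image_of_injective _ (add_right_injective (-t))]
  ring

end Translates

theorem LinearIndependent.smul_notMem_span_image {ι R M : Type*} [Ring R] [AddCommGroup M]
    [Module R M] {v : ι → M} (hv : LinearIndependent R v) {s : Set ι} {j : ι} (hj : j ∉ s)
    {c : R} (hc : c ≠ 0) : c • v j ∉ Submodule.span R (v '' s) := by
  intro hmem
  have hj' : c • v j ∈ Submodule.span R (v '' {j}) :=
    Submodule.smul_mem _ c (Submodule.subset_span ⟨j, rfl, rfl⟩)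
  have hzero : c • v j = 0 :=
    (Submodule.disjoint_def.1 (hv.disjoint_span_image (Set.disjoint_singleton_right.2 hj)))
      _ hmem hj'
  exact hc (hv.smul_left_injective j (by simpa using hzero))

theorem card_sub_self_of_linearIndependent {M : Type*} [AddCommGroup M] [DecidableEq M]
    {n : ℕ} {r : Fin n → M} (hr : LinearIndependent ℤ r) (P : ℕ → Finset M) (a : M)
    (hP0 : P 0 = {a}) (hPstep : ∀ j : Fin n, P (j.1 + 1) = P j.1 ∪ (P j.1).image (r j + ·)) :
    ∀ m ≤ n, (↑(P m - P m) : Set M) ⊆ Submodule.span ℤ (r '' {i | i.1 < m}) ∧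
      (P m - P m).card = 3 ^ m := by
  intro m
  induction m with
  | zero =>
    intro _
    simp [hP0]
  | succ m ih =>
    intro hm
    obtain ⟨hspan, hcard⟩ := ih (Nat.le_of_succ_le hm)
    set j : Fin n := ⟨m, hm⟩
    set S := Submodule.span ℤ (r '' {i | i.1 < m + 1})
    have hDS : (↑(P m - P m) : Set M) ⊆ S :=
      hspan.trans (Submodule.span_mono (Set.image_mono fun _ hi => Nat.lt_succ_of_lt hi))
    have hjS : r j ∈ S := Submodule.subset_span ⟨j, by simp [j], rfl⟩
    have hsep : ∀ c : ℤ, c ≠ 0 → ∀ d ∈ P m - P m, c • r j + d ∉ P m - P m := by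
      intro c hc d hd hd'
      refine hr.smul_notMem_span_image (s := {i | i.1 < m}) (j := j) (by simp [j]) hc ?_
      simpa using sub_mem (hspan hd') (hspan hd)
    rw [hPstep j, Finset.union_image_add_sub_self]
    refine ⟨?_, ?_⟩
    · intro z hz
      simp only [Finset.coe_union, Finset.coe_image, Set.mem_union, Set.mem_image] at hz
      rcases hz with (hz | ⟨d, hd, rfl⟩) | ⟨d, hd, rfl⟩
      · exact hDS hz
      · exact add_mem hjS (hDS hd)
      · exact add_mem (neg_mem hjS) (hDS hd)
    · rw [Finset.card_union_image_add_union_image_neg_add _ _ hsep, hcard, pow_succ]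
      ring

theorem stmt_3 (n : ℕ) (r : Fin n → ℝ)
    (hindep : ∀ x : Fin n → ℤ, (∑ i, (x i : ℝ) * r i) = 0 → x = 0)
    (P : ℕ → Finset ℝ) (hP0 : P 0 = {1})
    (hPstep : ∀ j : Fin n, P (j.1 + 1) = P j.1 ∪ (P j.1).image (fun a => r j + a)) :
    (P n - P n).card = 3 ^ n := by
  have hr : LinearIndependent ℤ r := Fintype.linearIndependent_iff.2 fun x hx => by
    simpa using congrFun (hindep x (by simpa [zsmul_eq_mul] using hx))
  exact (card_sub_self_of_linearIndependent hr P 1 hP0 hPstep n le_rfl).2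
end

section
/- Let p = log_4 3. For all reals x > 0 and 0 < γ ≤ 1, we have x^p + x^{2p} + γ^p ≥ (x+1)^p (x+γ)^p. -/
/-!
Put `K = (x + 1) ^ p`. The derivative of `t ↦ t ^ p - K * (x + t) ^ p` is
`p (x + t) ^ (p - 1) * ((t / (x + t)) ^ (p - 1) - K)`, whose second factor decreases, so on
`[0, 1]` the function is smallest at an endpoint. At `t = 0` the inequality is the subadditivity
of `t ↦ t ^ p`; at `t = 1` it is `(x + 1) ^ (2p) ≤ 1 + x ^ p + x ^ (2p)`, i.e. `gap p x ≥ 0`.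

Since `gap p x = x ^ (2p) * gap p x⁻¹`, it suffices to take `x ≤ 1`. As `4 ^ p = 3`, `gap p`
vanishes at `0` and `1`, and its derivative is `p x ^ (p - 1) * gapFactor p x`, where
`gapFactor p` also vanishes at `1`. The derivative of `gapFactor p` has the sign of
`gapFactorLog p`, whose own derivative `(2p - 1)(1 - p)(1 - x) / (x (x + 1) (p x + 1 - p))` is
nonnegative on `(0, 1)`.
So the sign of `gapFactor p` changes at most once, from `+` to `-`, before `1`; hence `gap p`
first increases and then decreases, and it is nonnegative between its two zeros.
-/

open Real Set

theorem min_le_of_hasDerivAt_mul {f φ ψ : ℝ → ℝ} {a b c : ℝ}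
    (hf : ContinuousOn f (Icc a b)) (hf' : ∀ t ∈ Ioo a b, HasDerivAt f (φ t * ψ t) t)
    (hφ : ∀ t ∈ Ioo a b, 0 < φ t)
    (hψ : ∀ s ∈ Ioo a b, ∀ t ∈ Ioo a b, s ≤ t → ψ s ≤ 0 → ψ t ≤ 0)
    (hc : c ∈ Icc a b) : min (f a) (f b) ≤ f c := by
  by_cases hneg : ∃ s ∈ Ioo a c, ψ s ≤ 0
  · obtain ⟨s, hs, hψs⟩ := hneg
    have hanti : AntitoneOn f (Icc c b) := by
      refine antitoneOn_of_hasDerivWithinAt_nonpos (f' := fun t => φ t * ψ t) (convex_Icc c b)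
        (hf.mono (Icc_subset_Icc_left hc.1)) (fun t ht => ?_) (fun t ht => ?_)
      all_goals
        rw [interior_Icc] at ht
        have ht' : t ∈ Ioo a b := ⟨hs.1.trans (hs.2.trans ht.1), ht.2⟩
      · exact (hf' t ht').hasDerivWithinAt
      · exact mul_nonpos_of_nonneg_of_nonpos (hφ t ht').le
          (hψ s ⟨hs.1, hs.2.trans_le hc.2⟩ t ht' (hs.2.trans ht.1).le hψs)
    exact min_le_of_right_le (hanti ⟨le_rfl, hc.2⟩ ⟨hc.2, le_rfl⟩ hc.2)
  · push Not at hneg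
    have hmono : MonotoneOn f (Icc a c) := by
      refine monotoneOn_of_hasDerivWithinAt_nonneg (f' := fun t => φ t * ψ t) (convex_Icc a c)
        (hf.mono (Icc_subset_Icc_right hc.2)) (fun t ht => ?_) (fun t ht => ?_)
      all_goals
        rw [interior_Icc] at ht
        have ht' : t ∈ Ioo a b := ⟨ht.1, ht.2.trans_le hc.2⟩
      · exact (hf' t ht').hasDerivWithinAt
      · exact (mul_pos (hφ t ht') (hneg t ht)).le
    exact min_le_of_left_le (hmono ⟨le_rfl, hc.1⟩ ⟨hc.1, le_rfl⟩ hc.1)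

theorem le_max_of_hasDerivAt_mul {f φ ψ : ℝ → ℝ} {a b c : ℝ}
    (hf : ContinuousOn f (Icc a b)) (hf' : ∀ t ∈ Ioo a b, HasDerivAt f (φ t * ψ t) t)
    (hφ : ∀ t ∈ Ioo a b, 0 < φ t)
    (hψ : ∀ s ∈ Ioo a b, ∀ t ∈ Ioo a b, s ≤ t → 0 ≤ ψ s → 0 ≤ ψ t)
    (hc : c ∈ Icc a b) : f c ≤ max (f a) (f b) := by
  have h := min_le_of_hasDerivAt_mul (f := -f) (ψ := -ψ) hf.neg
    (fun t ht => by simpa only [Pi.neg_apply, mul_neg] using (hf' t ht).neg) hφ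
    (fun s hs t ht hst => by simpa only [Pi.neg_apply, neg_nonpos] using hψ s hs t ht hst) hc
  simpa only [Pi.neg_apply, min_neg_neg, neg_le_neg_iff] using h

theorem min_le_rpow_sub_mul_rpow_add {p x K a b t : ℝ} (hp0 : 0 < p) (hp1 : p ≤ 1)
    (hx : 0 ≤ x) (ha : 0 ≤ a) (ht : t ∈ Icc a b) :
    min (a ^ p - K * (x + a) ^ p) (b ^ p - K * (x + b) ^ p) ≤ t ^ p - K * (x + t) ^ p := by
  refine min_le_of_hasDerivAt_mul (f := fun t => t ^ p - K * (x + t) ^ p)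
    (φ := fun t => p * (x + t) ^ (p - 1)) (ψ := fun t => (t / (x + t)) ^ (p - 1) - K)
    (Continuous.continuousOn (by fun_prop (disch := exact hp0.le)))
    (fun s hs => ?_) (fun s hs => ?_) (fun s hs r hr hsr hψs => ?_) ht
  · have hs0 : 0 < s := ha.trans_lt hs.1
    have hxs : 0 < x + s := by linarith
    have hd : HasDerivAt (fun t => t ^ p - K * (x + t) ^ p)
        (p * s ^ (p - 1) - K * (p * (x + s) ^ (p - 1))) s :=
      (hasDerivAt_rpow_const (Or.inl hs0.ne')).sub
        (((hasDerivAt_rpow_const (Or.inl hxs.ne')).comp_const_add x s).const_mul K)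
    refine hd.congr_deriv ?_
    rw [div_rpow hs0.le hxs.le]
    field_simp [(rpow_pos_of_pos hxs (p - 1)).ne']
  · have : 0 < x + s := by linarith [hs.1]
    positivity
  · have hs0 : 0 < s := ha.trans_lt hs.1
    have hmono : s / (x + s) ≤ r / (x + r) := by
      rw [div_le_div_iff₀ (by linarith) (by linarith)]
      nlinarith
    have := rpow_le_rpow_of_nonpos (by positivity) hmono (by linarith : p - 1 ≤ 0)
    linarith

theorem two_rpow_two_mul_logb_four_three : (2 : ℝ) ^ (2 * logb 4 3) = 3 := by
  rw [rpow_mul zero_le_two]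
  norm_num [rpow_logb]

theorem half_lt_and_lt_one_of_two_rpow_two_mul_eq_three {p : ℝ} (h3 : (2 : ℝ) ^ (2 * p) = 3) :
    1 / 2 < p ∧ p < 1 := by
  have h1 : (2 : ℝ) ^ (1 : ℝ) < 2 ^ (2 * p) := by rw [h3]; norm_num
  have h2 : (2 : ℝ) ^ (2 * p) < 2 ^ (2 : ℝ) := by rw [h3]; norm_num
  rw [rpow_lt_rpow_left_iff one_lt_two] at h1 h2
  constructor <;> linarith

theorem rpow_two_mul_eq_sq {x : ℝ} (hx : 0 ≤ x) (p : ℝ) : x ^ (2 * p) = (x ^ p) ^ 2 := by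
  rw [mul_comm, rpow_mul hx, rpow_two]

theorem mul_add_one_sub_pos {p x : ℝ} (hp0 : 0 < p) (hp1 : p ≤ 1) (hx : 0 < x) :
    0 < p * x + 1 - p := by
  nlinarith [mul_pos hp0 hx]

noncomputable def gap (p x : ℝ) : ℝ := 1 + x ^ p + x ^ (2 * p) - (x + 1) ^ (2 * p)

noncomputable def gapFactor (p x : ℝ) : ℝ :=
  1 + 2 * x ^ p - 2 * (x ^ (1 - p) * (x + 1) ^ (2 * p - 1))

noncomputable def gapFactorLog (p x : ℝ) : ℝ :=
  log p + (2 * p - 1) * log x + (2 - 2 * p) * log (x + 1) - log (p * x + 1 - p)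

theorem hasDerivAt_gap (p : ℝ) {x : ℝ} (hx : 0 < x) :
    HasDerivAt (gap p) (p * x ^ (p - 1) * gapFactor p x) x := by
  have hd : HasDerivAt (gap p)
      (p * x ^ (p - 1) + 2 * p * x ^ (2 * p - 1) - 2 * p * (x + 1) ^ (2 * p - 1)) x := by
    have h1 := hasDerivAt_rpow_const (x := x) (p := p) (Or.inl hx.ne')
    have h2 := hasDerivAt_rpow_const (x := x) (p := 2 * p) (Or.inl hx.ne')
    have h3 := (hasDerivAt_rpow_const (x := x + 1) (p := 2 * p)
      (Or.inl (by positivity))).comp_add_const x 1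
    exact ((h1.const_add 1).add h2).sub h3
  refine hd.congr_deriv ?_
  have hx1 : 0 < x + 1 := by positivity
  simp only [gapFactor, rpow_sub hx, rpow_sub hx1, rpow_one, rpow_two_mul_eq_sq hx.le]
  field_simp

theorem hasDerivAt_gapFactor (p : ℝ) {x : ℝ} (hx : 0 < x) :
    HasDerivAt (gapFactor p) (2 * x ^ (-p) * (x + 1) ^ (2 * p - 2) *
      (p * x ^ (2 * p - 1) * (x + 1) ^ (2 - 2 * p) - (p * x + 1 - p))) x := by
  have hx1 : 0 < x + 1 := by positivity
  have hd : HasDerivAt (gapFactor p)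
      (2 * (p * x ^ (p - 1)) - 2 * ((1 - p) * x ^ (1 - p - 1) * (x + 1) ^ (2 * p - 1)
        + x ^ (1 - p) * ((2 * p - 1) * (x + 1) ^ (2 * p - 1 - 1)))) x := by
    have h1 := hasDerivAt_rpow_const (x := x) (p := p) (Or.inl hx.ne')
    have h2 := hasDerivAt_rpow_const (x := x) (p := 1 - p) (Or.inl hx.ne')
    have h3 := (hasDerivAt_rpow_const (x := x + 1) (p := 2 * p - 1)
      (Or.inl hx1.ne')).comp_add_const x 1
    exact ((h1.const_mul 2).const_add 1).sub ((h2.mul h3).const_mul 2)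
  refine hd.congr_deriv ?_
  simp only [rpow_sub hx, rpow_sub hx1, rpow_neg hx.le, rpow_one, rpow_two,
    rpow_two_mul_eq_sq hx.le]
  field_simp
  ring

theorem gapFactorLog_nonneg_iff {p x : ℝ} (hp0 : 0 < p) (hp1 : p ≤ 1) (hx : 0 < x) :
    0 ≤ p * x ^ (2 * p - 1) * (x + 1) ^ (2 - 2 * p) - (p * x + 1 - p) ↔
      0 ≤ gapFactorLog p x := by
  have hx1 : 0 < x + 1 := by positivity
  have hlog : log (p * x ^ (2 * p - 1) * (x + 1) ^ (2 - 2 * p))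
      = log p + (2 * p - 1) * log x + (2 - 2 * p) * log (x + 1) := by
    rw [log_mul (by positivity) (by positivity), log_mul hp0.ne' (by positivity),
      log_rpow hx, log_rpow hx1]
  rw [sub_nonneg, ← log_le_log_iff (mul_add_one_sub_pos hp0 hp1 hx) (by positivity), hlog,
    gapFactorLog, sub_nonneg]

theorem monotoneOn_gapFactorLog {p : ℝ} (hp0 : 1 / 2 ≤ p) (hp1 : p ≤ 1) :
    MonotoneOn (gapFactorLog p) (Ioo 0 1) := by
  have hd : ∀ x ∈ Ioo (0 : ℝ) 1, HasDerivAt (gapFactorLog p)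
      ((2 * p - 1) * (1 - p) * (1 - x) / (x * (x + 1) * (p * x + 1 - p))) x := by
    intro x hx
    have hx0 : 0 < x := hx.1
    have hl := mul_add_one_sub_pos (by linarith) hp1 hx0
    have h1 := (hasDerivAt_log hx0.ne').const_mul (2 * p - 1)
    have h2 := ((hasDerivAt_log (by positivity : x + 1 ≠ 0)).comp_add_const x 1).const_mul
      (2 - 2 * p)
    have h3 := ((((hasDerivAt_id' x).const_mul p).add_const 1).sub_const p).log hl.ne'
    refine (((h1.const_add (log p)).add h2).sub h3).congr_deriv ?_
    field_simp
    ring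
  refine monotoneOn_of_hasDerivWithinAt_nonneg
    (f' := fun x => (2 * p - 1) * (1 - p) * (1 - x) / (x * (x + 1) * (p * x + 1 - p)))
    (convex_Ioo 0 1)
    (fun x hx => (hd x hx).continuousAt.continuousWithinAt) (fun x hx => ?_) (fun x hx => ?_)
  all_goals rw [interior_Ioo] at hx
  · exact (hd x hx).hasDerivWithinAt
  · have hl := mul_add_one_sub_pos (by linarith) hp1 hx.1
    have hx0 := hx.1
    have h1x : 0 ≤ 1 - x := by linarith [hx.2]
    have h2p : 0 ≤ 2 * p - 1 := by linarith
    have h1p : 0 ≤ 1 - p := by linarith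
    positivity

theorem gap_zero {p : ℝ} (hp : 0 < p) : gap p 0 = 0 := by
  simp [gap, zero_rpow hp.ne', zero_rpow (by positivity : 2 * p ≠ 0)]

theorem gap_one (p : ℝ) : gap p 1 = 3 - 2 ^ (2 * p) := by
  norm_num [gap]

theorem gapFactor_one (p : ℝ) : gapFactor p 1 = 3 - 2 ^ (2 * p) := by
  norm_num [gapFactor, rpow_sub two_pos]
  ring

theorem gapFactor_nonpos_of_le {p s t : ℝ} (h3 : (2 : ℝ) ^ (2 * p) = 3) (hs : 0 < s)
    (hst : s ≤ t) (ht : t ≤ 1) (hQs : gapFactor p s ≤ 0) : gapFactor p t ≤ 0 := by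
  obtain ⟨hp0, hp1⟩ := half_lt_and_lt_one_of_two_rpow_two_mul_eq_three h3
  have hpos : 0 < p := by linarith
  have hmax := le_max_of_hasDerivAt_mul (f := gapFactor p)
    (φ := fun x => 2 * x ^ (-p) * (x + 1) ^ (2 * p - 2))
    (ψ := fun x => p * x ^ (2 * p - 1) * (x + 1) ^ (2 - 2 * p) - (p * x + 1 - p))
    (fun x hx => (hasDerivAt_gapFactor p (hs.trans_le hx.1)).continuousAt.continuousWithinAt)
    (fun x hx => hasDerivAt_gapFactor p (hs.trans hx.1))
    (fun x hx => by have := hs.trans hx.1; positivity)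
    (fun u hu v hv huv hψu => ?_) ⟨hst, ht⟩
  · rw [gapFactor_one, h3, sub_self] at hmax
    exact hmax.trans (max_le hQs le_rfl)
  · have hu0 := hs.trans hu.1
    have hv0 := hs.trans hv.1
    rw [gapFactorLog_nonneg_iff hpos hp1.le hu0] at hψu
    rw [gapFactorLog_nonneg_iff hpos hp1.le hv0]
    exact hψu.trans (monotoneOn_gapFactorLog hp0.le hp1.le ⟨hu0, hu.2⟩ ⟨hv0, hv.2⟩ huv)

theorem gap_nonneg_of_le_one {p x : ℝ} (h3 : (2 : ℝ) ^ (2 * p) = 3) (hx0 : 0 ≤ x)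
    (hx1 : x ≤ 1) : 0 ≤ gap p x := by
  have hpos : 0 < p := by linarith [half_lt_and_lt_one_of_two_rpow_two_mul_eq_three h3]
  have hmin := min_le_of_hasDerivAt_mul (f := gap p) (φ := fun t => p * t ^ (p - 1))
    (ψ := gapFactor p) (Continuous.continuousOn (by unfold gap; fun_prop (disch := positivity)))
    (fun t ht => hasDerivAt_gap p ht.1) (fun t ht => by have := ht.1; positivity)
    (fun s hs t ht hst => gapFactor_nonpos_of_le h3 hs.1 hst ht.2.le) ⟨hx0, hx1⟩
  rwa [gap_zero hpos, gap_one, h3, sub_self, min_self] at hmin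

theorem gap_eq_rpow_mul_gap_inv (p : ℝ) {x : ℝ} (hx : 0 < x) :
    gap p x = x ^ (2 * p) * gap p x⁻¹ := by
  have hx1 : x⁻¹ + 1 = x⁻¹ * (x + 1) := by field_simp; ring
  simp only [gap, hx1, mul_rpow (inv_nonneg.2 hx.le) (by positivity : 0 ≤ x + 1),
    inv_rpow hx.le, rpow_two_mul_eq_sq hx.le]
  field_simp
  ring

theorem gap_nonneg {p x : ℝ} (h3 : (2 : ℝ) ^ (2 * p) = 3) (hx : 0 ≤ x) : 0 ≤ gap p x := by
  rcases le_or_gt x 1 with hx1 | hx1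
  · exact gap_nonneg_of_le_one h3 hx hx1
  · rw [gap_eq_rpow_mul_gap_inv p (by linarith)]
    exact mul_nonneg (by positivity)
      (gap_nonneg_of_le_one h3 (by positivity) (inv_le_one_of_one_le₀ hx1.le))

theorem stmt_4 (p : ℝ) (hp : p = Real.logb 4 3) (x γ : ℝ)
    (hx : 0 < x) (hγ0 : 0 < γ) (hγ1 : γ ≤ 1) :
    x ^ p + x ^ (2 * p) + γ ^ p ≥ (x + 1) ^ p * (x + γ) ^ p := by
  have h3 : (2 : ℝ) ^ (2 * p) = 3 := hp ▸ two_rpow_two_mul_logb_four_three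
  obtain ⟨hp0, hp1⟩ := half_lt_and_lt_one_of_two_rpow_two_mul_eq_three h3
  have hpos : 0 < p := by linarith
  have hmin := min_le_rpow_sub_mul_rpow_add (K := (x + 1) ^ p) hpos hp1.le hx.le le_rfl
    ⟨hγ0.le, hγ1⟩
  rw [zero_rpow hpos.ne', add_zero, one_rpow] at hmin
  have hleft : (x + 1) ^ p * x ^ p ≤ x ^ p + x ^ (2 * p) :=
    calc (x + 1) ^ p * x ^ p ≤ (x ^ p + 1) * x ^ p := by
          gcongr
          simpa using rpow_add_le_add_rpow hx.le zero_le_one hpos.le hp1.le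
      _ = x ^ p + x ^ (2 * p) := by rw [rpow_two_mul_eq_sq hx.le]; ring
  have hright : (x + 1) ^ p * (x + 1) ^ p ≤ 1 + x ^ p + x ^ (2 * p) := by
    have := gap_nonneg h3 hx.le
    rw [gap] at this
    rw [← sq, ← rpow_two_mul_eq_sq (by positivity)]
    linarith
  rcases min_le_iff.1 hmin with h | h <;> linarith
end

section
/- Let p = log_4 3. The function f_0(x) = x^p + x^{2p} − (x^2 + x)^p is strictly increasing on (0, ∞), and consequently f_0(x) ≥ 0 for all x ≥ 0. -/
/-!
Writing `g x = 1 + x ^ p - (1 + x) ^ p`, one has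
`x ^ p + x ^ (2 * p) - (x ^ 2 + x) ^ p = x ^ p * g x`.
For `0 < p < 1` the derivative `p * (x ^ (p - 1) - (1 + x) ^ (p - 1))` of `g` is positive, so `g` is
strictly increasing from `g 0 = 0`; the product of the increasing nonnegative factors `x ^ p` and
`g x` is then strictly increasing and nonnegative. Since `1 < 3 < 4`, `p = log 3 / log 4` lies in
`(0, 1)`.
-/

open Real Set

lemma logb_four_three_pos : 0 < logb 4 3 :=
  logb_pos (by norm_num) (by norm_num)

lemma logb_four_three_lt_one : logb 4 3 < 1 := by
  rw [logb_lt_iff_lt_rpow (by norm_num) (by norm_num), rpow_one]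
  norm_num

section

variable {p : ℝ}

lemma hasDerivAt_one_add_rpow_sub_one_add_rpow {x : ℝ} (hx : 0 < x) :
    HasDerivAt (fun x : ℝ => 1 + x ^ p - (1 + x) ^ p)
      (p * x ^ (p - 1) - p * (1 + x) ^ (p - 1)) x := by
  have h_pow : HasDerivAt (fun x : ℝ => x ^ p) (p * x ^ (p - 1)) x :=
    hasDerivAt_rpow_const (Or.inl hx.ne')
  have h_shift : HasDerivAt (fun x : ℝ => (1 + x) ^ p) (p * (1 + x) ^ (p - 1)) x := by
    simpa using ((hasDerivAt_id x).const_add 1).rpow_const (p := p) (Or.inl (by positivity))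
  exact (h_pow.const_add 1).sub h_shift

lemma strictMonoOn_one_add_rpow_sub_one_add_rpow (hp0 : 0 < p) (hp1 : p < 1) :
    StrictMonoOn (fun x : ℝ => 1 + x ^ p - (1 + x) ^ p) (Ici 0) := by
  have h_cont : ContinuousOn (fun x : ℝ => 1 + x ^ p - (1 + x) ^ p) (Ici 0) :=
    Continuous.continuousOn (by fun_prop (disch := exact hp0.le))
  refine strictMonoOn_of_hasDerivWithinAt_pos (convex_Ici 0) h_cont
    (fun x hx =>
      (hasDerivAt_one_add_rpow_sub_one_add_rpow (interior_Ici.subset hx)).hasDerivWithinAt)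
    fun x hx => ?_
  have hx : 0 < x := interior_Ici.subset hx
  have : (1 + x) ^ (p - 1) < x ^ (p - 1) := rpow_lt_rpow_of_neg hx (by linarith) (by linarith)
  nlinarith

lemma rpow_add_rpow_two_mul_sub_eq {x : ℝ} (hx : 0 ≤ x) :
    x ^ p + x ^ (2 * p) - (x ^ 2 + x) ^ p = x ^ p * (1 + x ^ p - (1 + x) ^ p) := by
  have h_sq : x ^ (2 * p) = x ^ p * x ^ p := by
    rw [mul_comm, rpow_mul hx, rpow_two, sq]
  have h_mul : (x ^ 2 + x) ^ p = x ^ p * (1 + x) ^ p := by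
    rw [← mul_rpow hx (by positivity)]
    ring_nf
  rw [h_sq, h_mul]
  ring

end

theorem stmt_5 (p : ℝ) (hp : p = Real.logb 4 3) :
    StrictMonoOn (fun x : ℝ => x ^ p + x ^ (2 * p) - (x ^ 2 + x) ^ p) (Set.Ioi 0) ∧
    ∀ x : ℝ, 0 ≤ x → 0 ≤ x ^ p + x ^ (2 * p) - (x ^ 2 + x) ^ p := by
  have hp0 : 0 < p := hp ▸ logb_four_three_pos
  have hg := strictMonoOn_one_add_rpow_sub_one_add_rpow hp0 (hp ▸ logb_four_three_lt_one)
  have hg_nonneg : ∀ x : ℝ, 0 ≤ x → 0 ≤ 1 + x ^ p - (1 + x) ^ p := fun x hx => by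
    simpa [zero_rpow hp0.ne'] using hg.monotoneOn self_mem_Ici hx hx
  refine ⟨fun a (ha : 0 < a) b (hb : 0 < b) hab => ?_, fun x hx => ?_⟩
  · simp only [rpow_add_rpow_two_mul_sub_eq ha.le, rpow_add_rpow_two_mul_sub_eq hb.le]
    exact mul_lt_mul'' (rpow_lt_rpow ha.le hab hp0) (hg ha.le hb.le hab) (by positivity)
      (hg_nonneg a ha.le)
  · rw [rpow_add_rpow_two_mul_sub_eq hx]
    exact mul_nonneg (by positivity) (hg_nonneg x hx)
end

section
/- Let p = log_4 3. For all x ≥ 0, we have x^p + x^{2p} + 1 ≥ (x+1)^{2p}. -/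
set_option linter.unusedSectionVars false

open Real Set

noncomputable def fF (p x : ℝ) : ℝ := x ^ p + x ^ (2*p) + 1 - (x+1) ^ (2*p)
noncomputable def KF (p x : ℝ) : ℝ := x ^ (-p) + 2 - 2 * ((x+1)/x) ^ (2*p-1)
noncomputable def QF (x : ℝ) : ℝ := x + 2 + 1/x

lemma QF_eq {x : ℝ} (hx : x ≠ 0) : QF x = (x+1)*(x+1)/x := by
  rw [QF]; field_simp; ring

lemma QF_anti {x y : ℝ} (hx : 0 < x) (hxy : x < y) (hy1 : y ≤ 1) : QF y < QF x := by
  have hy : 0 < y := hx.trans hxy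
  have h1 : QF x - QF y = (y - x) * (1 - x*y) / (x*y) := by
    simp only [QF]; field_simp; ring
  have hxy1 : x * y < 1 := by nlinarith
  nlinarith [mul_pos hx hy, sub_pos.2 hxy, sub_pos.2 hxy1,
    div_pos (mul_pos (sub_pos.2 hxy) (sub_pos.2 hxy1)) (mul_pos hx hy)]

section withp

variable {p : ℝ} (hp0 : 0 < p) (hp34 : 3/4 < p) (hp1 : p < 1) (h4 : (4:ℝ)^p = 3)

include h4 in
lemma two_rpow : (2:ℝ) ^ (2*p) = 3 := by
  rw [rpow_mul (by norm_num : (0:ℝ) ≤ 2)]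
  rw [show ((2:ℝ)^(2:ℝ)) = 4 by
    rw [show (2:ℝ) = ((2:ℕ):ℝ) by norm_num, rpow_natCast]; norm_num]
  exact h4

include hp0 h4 in
lemma KF_one : KF p 1 = 0 := by
  have h2 : (2:ℝ) ^ (2*p) = 3 := two_rpow h4
  have h2' : (2:ℝ) ^ (2*p-1) = 3/2 := by
    rw [rpow_sub (by norm_num : (0:ℝ) < 2), h2, rpow_one]
  simp [KF, h2']
  norm_num [h2']

include hp0 h4 in
lemma fF_one : fF p 1 = 0 := by
  have h2 : (2:ℝ) ^ (2*p) = 3 := two_rpow h4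
  simp [fF]
  norm_num [h2]

include hp0 in
lemma fF_zero : fF p 0 = 0 := by
  simp [fF, Real.zero_rpow hp0.ne', Real.zero_rpow (by positivity : (2*p) ≠ 0)]

include hp0 hp1 in
lemma hasDerivAt_KF {x : ℝ} (hx : 0 < x) :
    HasDerivAt (KF p) (x^(-p-1) * ((4*p-2) * QF x ^ (p-1) - p)) x := by
  have hx1 : (0:ℝ) < x + 1 := by linarith
  have hA : HasDerivAt (fun x : ℝ => x ^ (-p)) (-p * x ^ (-p-1)) x :=
    hasDerivAt_rpow_const (Or.inl hx.ne')
  have hg : HasDerivAt (fun x : ℝ => (x+1)/x) ((1*x - (x+1)*1)/(x^2)) x :=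
    ((hasDerivAt_id x).add_const 1).div (hasDerivAt_id x) hx.ne'
  have hB : HasDerivAt (fun x : ℝ => ((x+1)/x) ^ (2*p-1))
      ((1*x - (x+1)*1)/(x^2) * (2*p-1) * ((x+1)/x) ^ (2*p-1-1)) x :=
    hg.rpow_const (Or.inl (by positivity))
  have h := (hA.add_const 2).sub (hB.const_mul 2)
  have e3 : (x:ℝ)^(2:ℕ) = x^(2:ℝ) := by
    rw [← rpow_natCast x 2]; norm_num
  have key : ((x+1)/x) ^ (2*p-1-1) / x^2 = x^(-p-1) * QF x ^ (p-1) := by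
    have e1 : QF x ^ (p-1) = (x+1)^(2*p-2) / x^(p-1) := by
      rw [QF_eq hx.ne', div_rpow (by positivity) hx.le, mul_rpow hx1.le hx1.le,
        ← rpow_add hx1, show (p-1)+(p-1) = 2*p-2 by ring]
    have L : ((x+1)/x) ^ (2*p-1-1) / x^2 = (x+1)^(2*p-2) * x^(-(2*p)) := by
      rw [show 2*p-1-1 = 2*p-2 by ring, div_rpow hx1.le hx.le, e3, div_div,
        ← rpow_add hx, div_eq_mul_inv, ← rpow_neg hx.le,
        show -(2*p-2+2) = -(2*p) by ring]
    have R : x^(-p-1) * QF x ^ (p-1) = (x+1)^(2*p-2) * x^(-(2*p)) := by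
      rw [e1, div_eq_mul_inv, ← rpow_neg hx.le, mul_comm (x^(-p-1)), mul_assoc,
        ← rpow_add hx, show -(p-1) + (-p-1) = -(2*p) by ring]
    rw [L, R]
  refine h.congr_deriv (Eq.symm ?_)
  have hd : (1*x - (x+1)*1)/(x^2) = -(1/x^2) := by field_simp; ring
  rw [hd]
  have : (-(1/x^2)) * (2*p-1) * ((x+1)/x) ^ (2*p-1-1)
      = -((2*p-1) * (((x+1)/x) ^ (2*p-1-1) / x^2)) := by ring
  rw [this, key]
  ring

include hp0 in
lemma hasDerivAt_fF {x : ℝ} (hx : 0 < x) :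
    HasDerivAt (fF p) (p * x^(2*p-1) * KF p x) x := by
  have hx1 : (0:ℝ) < x + 1 := by linarith
  have hA : HasDerivAt (fun x : ℝ => x ^ p) (p * x ^ (p-1)) x :=
    hasDerivAt_rpow_const (Or.inl hx.ne')
  have hB : HasDerivAt (fun x : ℝ => x ^ (2*p)) ((2*p) * x ^ (2*p-1)) x :=
    hasDerivAt_rpow_const (Or.inl hx.ne')
  have hC : HasDerivAt (fun x : ℝ => (x+1) ^ (2*p)) (1 * (2*p) * (x+1) ^ (2*p-1)) x := by
    have := ((hasDerivAt_id x).add_const 1).rpow_const (p := 2*p) (Or.inl hx1.ne')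
    simpa using this
  have h := ((hA.add hB).add_const 1).sub hC
  refine h.congr_deriv (Eq.symm ?_)
  have e1 : x^(2*p-1) * x^(-p) = x^(p-1) := by
    rw [← rpow_add hx, show 2*p-1 + -p = p-1 by ring]
  have e2 : x^(2*p-1) * ((x+1)/x)^(2*p-1) = (x+1)^(2*p-1) := by
    rw [← mul_rpow hx.le (by positivity), mul_div_cancel₀ _ hx.ne']
  simp only [KF]
  linear_combination p * e1 - 2 * p * e2

include hp0 hp34 hp1 h4 in
lemma key_lemma : ∀ x ∈ Icc (0:ℝ) 1, 0 ≤ fF p x := by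
  have hp2 : 0 < 4*p - 2 := by linarith
  have h1p : 0 < 1 - p := by linarith
  set c : ℝ := (4*p-2)/p with hc
  have hcpos : 0 < c := by positivity
  set M : ℝ := c ^ (1/(1-p)) with hM
  have hMpos : 0 < M := rpow_pos_of_pos hcpos _
  have hM4 : 4 < M := by
    have h41p : (4:ℝ)^(1-p) = 4/3 := by
      rw [rpow_sub (by norm_num : (0:ℝ) < 4), rpow_one, h4]
    have hc43 : (4:ℝ)^(1-p) < c := by
      rw [h41p, hc, div_lt_div_iff₀ (by norm_num) hp0]; nlinarith
    have h2 := rpow_lt_rpow (by positivity) hc43 (by positivity : 0 < 1/(1-p))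
    rw [← rpow_mul (by norm_num : (0:ℝ) ≤ 4), one_div, mul_inv_cancel₀ h1p.ne',
      rpow_one] at h2
    rw [hM, one_div]
    exact h2
  have hMp : (4*p-2) * M ^ (p-1) = p := by
    rw [hM, ← rpow_mul hcpos.le, show 1/(1-p) * (p-1) = -1 by
      (field_simp; ring), rpow_neg_one, hc]
    field_simp
  -- the critical point xm of KF
  obtain ⟨xm, hxm_mem, hxm⟩ : ∃ xm ∈ Ioo (1/M) 1, QF xm = M := by
    have ha0 : (0:ℝ) < 1/M := by positivity
    have ha1 : 1/M < 1 := by rw [div_lt_one hMpos]; linarith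
    have hQcont : ContinuousOn QF (Icc (1/M) 1) := by
      apply ContinuousOn.add (continuousOn_id.add continuousOn_const)
      exact continuousOn_const.div continuousOn_id
        (fun x hx => (lt_of_lt_of_le ha0 hx.1).ne')
    have hmem : M ∈ Ioo (QF 1) (QF (1/M)) := by
      constructor
      · show QF 1 < M
        simp only [QF]; norm_num; linarith
      · show M < QF (1/M)
        have h1 : QF (1/M) = 1/M + 2 + M := by
          simp only [QF, one_div, inv_inv]
        rw [h1]; linarith
    have himg := intermediate_value_Ioo' (le_of_lt ha1) hQcont hmem
    obtain ⟨xm, hxm1, hxm2⟩ := himg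
    exact ⟨xm, hxm1, hxm2⟩
  have hxm0 : 0 < xm := lt_trans (by positivity) hxm_mem.1
  have hxm1 : xm < 1 := hxm_mem.2
  -- K is strictly decreasing on (0, xm]
  have hKanti : StrictAntiOn (KF p) (Ioc 0 xm) := by
    apply strictAntiOn_of_deriv_neg (convex_Ioc 0 xm)
    · exact fun x hx => ((hasDerivAt_KF hp0 hp1 hx.1).continuousAt).continuousWithinAt
    · intro x hx
      rw [interior_Ioc] at hx
      rw [(hasDerivAt_KF hp0 hp1 hx.1).deriv]
      have hQx : M < QF x := by
        rw [← hxm]; exact QF_anti hx.1 hx.2 hxm1.le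
      have h5 : QF x ^ (p-1) < M ^ (p-1) :=
        rpow_lt_rpow_of_neg hMpos hQx (by linarith)
      have h6 : (4*p-2) * QF x ^ (p-1) - p < 0 := by nlinarith
      exact mul_neg_of_pos_of_neg (rpow_pos_of_pos hx.1 _) h6
  -- K is strictly increasing on [xm, 1]
  have hKmono : StrictMonoOn (KF p) (Icc xm 1) := by
    apply strictMonoOn_of_deriv_pos (convex_Icc xm 1)
    · exact fun x hx =>
        ((hasDerivAt_KF hp0 hp1 (lt_of_lt_of_le hxm0 hx.1)).continuousAt).continuousWithinAt
    · intro x hx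
      rw [interior_Icc] at hx
      have hx0 : 0 < x := lt_trans hxm0 hx.1
      rw [(hasDerivAt_KF hp0 hp1 hx0).deriv]
      have hQx : QF x < M := by
        rw [← hxm]; exact QF_anti hxm0 hx.1 hx.2.le
      have hQxpos : 0 < QF x := by
        have : 0 < 1/x := by positivity
        simp only [QF]; linarith
      have h5 : M ^ (p-1) < QF x ^ (p-1) :=
        rpow_lt_rpow_of_neg hQxpos hQx (by linarith)
      have h6 : 0 < (4*p-2) * QF x ^ (p-1) - p := by nlinarith
      exact mul_pos (rpow_pos_of_pos hx0 _) h6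
  -- continuity of f on [0,1]
  have hfcont : ContinuousOn (fF p) (Icc (0:ℝ) 1) := by
    apply ContinuousOn.sub
    · apply ContinuousOn.add
      apply ContinuousOn.add
      · exact fun x _ => (continuousAt_rpow_const x p (Or.inr hp0.le)).continuousWithinAt
      · exact fun x _ =>
          (continuousAt_rpow_const x (2*p) (Or.inr (by positivity))).continuousWithinAt
      · exact continuousOn_const
    · intro x hx
      exact ((continuousAt_id.add continuousAt_const).rpow_const
        (Or.inr (by positivity))).continuousWithinAt
  -- main argument
  intro x hxmem
  by_contra hneg
  push_neg at hneg
  obtain ⟨cm, hcm_mem, hcm_min⟩ :=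
    isCompact_Icc.exists_isMinOn (nonempty_Icc.2 (by norm_num)) hfcont
  have hfcm : fF p cm < 0 := lt_of_le_of_lt (hcm_min hxmem) hneg
  have hcm0 : 0 < cm := by
    rcases lt_or_eq_of_le hcm_mem.1 with h | h
    · exact h
    · exfalso; rw [← h, fF_zero hp0] at hfcm; linarith
  have hcm1 : cm < 1 := by
    rcases lt_or_eq_of_le hcm_mem.2 with h | h
    · exact h
    · exfalso; rw [h, fF_one hp0 h4] at hfcm; linarith
  have hKcm : KF p cm = 0 := by
    have hloc : IsLocalMin (fF p) cm :=
      hcm_min.isLocalMin (Icc_mem_nhds hcm0 hcm1)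
    have hz := hloc.hasDerivAt_eq_zero (hasDerivAt_fF hp0 hcm0)
    have hpow : (0:ℝ) < cm ^ (2*p-1) := rpow_pos_of_pos hcm0 _
    have hppow : p * cm ^ (2*p-1) ≠ 0 := by positivity
    exact (mul_eq_zero.1 hz).resolve_left hppow
  obtain ⟨d, hd_mem, hd⟩ := exists_hasDerivAt_eq_slope (fF p)
    (fun x => p * x^(2*p-1) * KF p x) hcm1
    (hfcont.mono (Icc_subset_Icc hcm0.le le_rfl))
    (fun x hx => hasDerivAt_fF hp0 (lt_trans hcm0 hx.1))
  have hd0 : 0 < d := lt_trans hcm0 hd_mem.1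
  have hdpos : 0 < p * d^(2*p-1) * KF p d := by
    rw [hd, fF_one hp0 h4]
    apply div_pos (by linarith) (by linarith [hd_mem.2])
  have hKd : 0 < KF p d := by
    by_contra h
    push_neg at h
    nlinarith [mul_nonneg (mul_pos hp0 (rpow_pos_of_pos hd0 (2*p-1))).le
      (neg_nonneg.2 h)]
  rcases le_or_gt d xm with h | h
  · have := hKanti ⟨hcm0, le_of_lt (lt_of_lt_of_le hd_mem.1 h)⟩ ⟨hd0, h⟩ hd_mem.1
    -- KF p d < KF p cm = 0
    rw [hKcm] at this
    linarith
  · have := hKmono ⟨le_of_lt h, hd_mem.2.le⟩ (right_mem_Icc.2 (by linarith)) hd_mem.2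
    -- KF p d < KF p 1 = 0
    rw [KF_one hp0 h4] at this
    linarith

end withp

theorem stmt_7 (p : ℝ) (hp : p = Real.logb 4 3) (x : ℝ) (hx : 0 ≤ x) :
    x ^ p + x ^ (2 * p) + 1 ≥ (x + 1) ^ (2 * p) := by
  have hlog4 : 0 < Real.log 4 := Real.log_pos (by norm_num)
  have hlog34 : Real.log 3 < Real.log 4 := Real.log_lt_log (by norm_num) (by norm_num)
  have hlog3 : 0 < Real.log 3 := Real.log_pos (by norm_num)
  have hp0 : 0 < p := by
    rw [hp, Real.logb]; positivity
  have hp1 : p < 1 := by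
    rw [hp, Real.logb, div_lt_one hlog4]; exact hlog34
  have hp34 : 3/4 < p := by
    rw [hp, Real.logb, lt_div_iff₀ hlog4]
    have h64 : Real.log 64 < Real.log 81 := Real.log_lt_log (by norm_num) (by norm_num)
    have e1 : Real.log 64 = 3 * Real.log 4 := by
      rw [show (64:ℝ) = 4^(3:ℕ) by norm_num, Real.log_pow]; push_cast; ring
    have e2 : Real.log 81 = 4 * Real.log 3 := by
      rw [show (81:ℝ) = 3^(4:ℕ) by norm_num, Real.log_pow]; push_cast; ring
    nlinarith
  have h4 : (4:ℝ)^p = 3 := by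
    rw [hp]; exact Real.rpow_logb (by norm_num) (by norm_num) (by norm_num)
  rcases eq_or_lt_of_le hx with h0 | hx0
  · rw [← h0]
    rw [Real.zero_rpow hp0.ne', Real.zero_rpow (by positivity : (2*p) ≠ 0)]
    norm_num
  rcases le_or_gt x 1 with hx1 | hx1
  · have := key_lemma hp0 hp34 hp1 h4 x ⟨hx, hx1⟩
    simp only [fF] at this
    linarith
  · -- x > 1 : use symmetry with y = x⁻¹
    have hy0 : 0 < x⁻¹ := by positivity
    have hy1 : x⁻¹ ≤ 1 := by
      rw [inv_le_one_iff₀]; right; linarith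
    have hfy := key_lemma hp0 hp34 hp1 h4 x⁻¹ ⟨hy0.le, hy1⟩
    simp only [fF] at hfy
    have hxp : (0:ℝ) < x ^ p := rpow_pos_of_pos hx0 _
    have hx2p : (0:ℝ) < x ^ (2*p) := rpow_pos_of_pos hx0 _
    have e1 : x^(2*p) * (x⁻¹+1)^(2*p) = (x+1)^(2*p) := by
      rw [← Real.mul_rpow hx0.le (by positivity)]
      congr 1
      field_simp
      ring
    have e2 : x^(2*p) * (x⁻¹)^p = x^p := by
      rw [Real.inv_rpow hx0.le, show 2*p = p + p by ring, Real.rpow_add hx0,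
        mul_assoc, mul_inv_cancel₀ hxp.ne', mul_one]
    have e3 : x^(2*p) * (x⁻¹)^(2*p) = 1 := by
      rw [Real.inv_rpow hx0.le, mul_inv_cancel₀ hx2p.ne']
    have hstep : (x+1)^(2*p) ≤ x^p + 1 + x^(2*p) := by
      calc (x+1)^(2*p) = x^(2*p) * ((x⁻¹+1)^(2*p)) := e1.symm
        _ ≤ x^(2*p) * ((x⁻¹)^p + (x⁻¹)^(2*p) + 1) := by
            apply mul_le_mul_of_nonneg_left (by linarith) hx2p.le
        _ = x^p + 1 + x^(2*p) := by
            rw [mul_add, mul_add, e2, e3]; ring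
    linarith
end

section
/- Let p = log_4 3. For all nonnegative reals a, b, c, d, we have (ad)^p + (bc)^p + max((ac)^p, (bd)^p) ≥ ((a+b)(c+d))^p. -/
/-! With `q = 2p`, everything rests on the two-term inequality
`(C + D)^(2p) ≤ C^(2p) + D^(2p) + (C D)^p` for `1/2 ≤ p ≤ 1` and `4^p ≤ 3`. By homogeneity it
reduces to `C = 1`, `D = u ∈ (0, 1]`; divided by `u^p` the defect becomes
`u^p + u^(-p) + 1 - (1 + u)^(2p) u^(-p)`, which is invariant under `u ↦ 1/u`, decreasing on
`(0, 1]` (Bernoulli's inequality controls the sign of its derivative) and equal to `3 - 4^p ≥ 0`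
at `u = 1`.

For the theorem put `x = ad`, `y = bc`, `z = ac`, `w = bd`, with `w ≤ z` by symmetry. Since
`xy = zw`, we get `z (x + y + z + w) = (z + x)(z + y)`. Squaring `p`-th powers and applying the
two-term inequality to both factors gives, with `X = x^p` etc.,
`(z^p (x + y + z + w)^p)^2 ≤ (Z² + X² + ZX)(Z² + Y² + ZY) ≤ (Z (X + Y + Z))²`,
the last step because `XY = (zw)^p ≤ Z²`. -/

open Real Set

lemma rpow_add_one_add_rpow_sub_one_mul_le_one {q s : ℝ} (hq1 : 1 ≤ q) (hq2 : q ≤ 2)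
    (hs : 0 ≤ s) (hs1 : s ≤ 1) : s ^ q + (1 + s) ^ (q - 1) * (1 - s) ≤ 1 := by
  have hr0 : 0 ≤ q - 1 := by linarith
  have hr1 : q - 1 ≤ 1 := by linarith
  have bernoulli_s : s ^ (q - 1) ≤ 1 + (q - 1) * (s - 1) := by
    simpa using rpow_one_add_le_one_add_mul_self (by linarith : -1 ≤ s - 1) hr0 hr1
  have bernoulli_one_add_s : (1 + s) ^ (q - 1) ≤ 1 + (q - 1) * s :=
    rpow_one_add_le_one_add_mul_self (by linarith) hr0 hr1
  have hsq : s ^ q = s * s ^ (q - 1) := by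
    rw [← rpow_one_add' hs (by linarith)]; ring_nf
  calc s ^ q + (1 + s) ^ (q - 1) * (1 - s)
      ≤ s * (1 + (q - 1) * (s - 1)) + (1 + (q - 1) * s) * (1 - s) := by
        rw [hsq]
        gcongr
    _ = 1 := by ring

lemma antitoneOn_rpow_add_rpow_neg_add_one_sub {p : ℝ} (hp1 : 1 / 2 ≤ p) (hp2 : p ≤ 1) :
    AntitoneOn (fun u : ℝ => u ^ p + u ^ (-p) + 1 - (1 + u) ^ (2 * p) * u ^ (-p))
      (Ioc 0 1) := by
  have hderiv : ∀ u : ℝ, 0 < u →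
      HasDerivAt (fun u : ℝ => u ^ p + u ^ (-p) + 1 - (1 + u) ^ (2 * p) * u ^ (-p))
        (p * u ^ (-p - 1) * (u ^ (2 * p) + (1 + u) ^ (2 * p - 1) * (1 - u) - 1)) u := by
    intro u hu
    have h1u : 0 < 1 + u := by linarith
    have d := (((hasDerivAt_rpow_const (p := p) (Or.inl hu.ne')).add
      (hasDerivAt_rpow_const (p := -p) (Or.inl hu.ne'))).add_const 1).sub
      ((((hasDerivAt_id' u).const_add 1).rpow_const (p := 2 * p) (Or.inl h1u.ne')).mul
        (hasDerivAt_rpow_const (p := -p) (Or.inl hu.ne')))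
    refine d.congr_deriv ?_
    have e1 : u ^ (p - 1) = u ^ (2 * p) * u ^ (-p - 1) := by
      rw [← rpow_add hu]; ring_nf
    have e2 : u ^ (-p) = u * u ^ (-p - 1) := by
      rw [← rpow_one_add' hu.le (by linarith)]; ring_nf
    have e3 : (1 + u) ^ (2 * p) = (1 + u) * (1 + u) ^ (2 * p - 1) := by
      rw [← rpow_one_add' h1u.le (by linarith)]; ring_nf
    rw [e1, e2, e3]
    ring
  refine antitoneOn_of_deriv_nonpos (convex_Ioc 0 1)
    (fun u hu => (hderiv u hu.1).continuousAt.continuousWithinAt) ?_ ?_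
  · rw [interior_Ioc]
    exact fun u hu => (hderiv u hu.1).differentiableAt.differentiableWithinAt
  · rw [interior_Ioc]
    intro u hu
    rw [(hderiv u hu.1).deriv]
    have hbracket := rpow_add_one_add_rpow_sub_one_mul_le_one (q := 2 * p) (by linarith)
      (by linarith) hu.1.le hu.2.le
    exact mul_nonpos_of_nonneg_of_nonpos (by have := hu.1; positivity) (by linarith)

lemma one_add_rpow_two_mul_le {p t : ℝ} (hp1 : 1 / 2 ≤ p) (hp2 : p ≤ 1)
    (h4p : (4 : ℝ) ^ p ≤ 3) (ht : 0 ≤ t) (ht1 : t ≤ 1) :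
    (1 + t) ^ (2 * p) ≤ 1 + t ^ (2 * p) + t ^ p := by
  rcases ht.eq_or_lt with rfl | ht
  · simp [zero_rpow (by linarith : 2 * p ≠ 0), zero_rpow (by linarith : p ≠ 0)]
  have h := antitoneOn_rpow_add_rpow_neg_add_one_sub hp1 hp2 ⟨ht, ht1⟩ ⟨one_pos, le_rfl⟩ ht1
  have h2 : (1 + 1 : ℝ) ^ (2 * p) = 4 ^ p := by
    rw [rpow_mul (by norm_num), rpow_two]; norm_num
  simp only [one_rpow, h2, mul_one] at h
  have hinv : t ^ p * t ^ (-p) = 1 := by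
    rw [← rpow_add ht, add_neg_cancel, rpow_zero]
  have hsq : t ^ (2 * p) = t ^ p * t ^ p := by
    rw [← rpow_add ht]; ring_nf
  have hprod := mul_nonneg (rpow_nonneg ht.le p)
    (by linarith : 0 ≤ t ^ p + t ^ (-p) + 1 - (1 + t) ^ (2 * p) * t ^ (-p))
  linear_combination hprod + (1 - (1 + t) ^ (2 * p)) * hinv - hsq

lemma add_rpow_two_mul_le {p C D : ℝ} (hp1 : 1 / 2 ≤ p) (hp2 : p ≤ 1)
    (h4p : (4 : ℝ) ^ p ≤ 3) (hC : 0 ≤ C) (hD : 0 ≤ D) :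
    (C + D) ^ (2 * p) ≤ C ^ (2 * p) + D ^ (2 * p) + (C * D) ^ p := by
  wlog hDC : D ≤ C generalizing C D
  · have := this hD hC (le_of_not_ge hDC)
    rwa [add_comm D, mul_comm D, add_comm (D ^ _)] at this
  rcases hC.eq_or_lt with rfl | hC
  · obtain rfl : D = 0 := le_antisymm hDC hD
    simp [zero_rpow (by linarith : 2 * p ≠ 0), zero_rpow (by linarith : p ≠ 0)]
  obtain ⟨t, rfl⟩ : ∃ t, D = C * t := ⟨D / C, by field_simp⟩
  have ht : 0 ≤ t := nonneg_of_mul_nonneg_right hD hC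
  have ht1 : t ≤ 1 := le_of_mul_le_mul_left (by linarith) hC
  have hC2 : C ^ (2 * p) = (C * C) ^ p := by
    rw [rpow_mul hC.le, rpow_two, ← sq]
  calc (C + C * t) ^ (2 * p) = C ^ (2 * p) * (1 + t) ^ (2 * p) := by
        rw [← mul_rpow hC.le (by positivity), mul_one_add]
    _ ≤ C ^ (2 * p) * (1 + t ^ (2 * p) + t ^ p) := by
        gcongr
        exact one_add_rpow_two_mul_le hp1 hp2 h4p ht ht1
    _ = C ^ (2 * p) + (C * t) ^ (2 * p) + (C * (C * t)) ^ p := by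
        rw [mul_rpow hC.le ht, ← mul_assoc, mul_rpow (by positivity) ht, ← hC2]
        ring

lemma mul_sq_add_sq_add_mul_le_sq {R : Type*} [CommRing R] [LinearOrder R]
    [IsStrictOrderedRing R] {Z U V : R} (hZ : 0 ≤ Z) (hU : 0 ≤ U) (hV : 0 ≤ V)
    (hUV : U * V ≤ Z ^ 2) :
    (Z ^ 2 + U ^ 2 + Z * U) * (Z ^ 2 + V ^ 2 + Z * V) ≤ (Z * (U + V + Z)) ^ 2 := by
  have h : 0 ≤ (Z ^ 2 - U * V) * (Z * U + Z * V + U * V) :=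
    mul_nonneg (sub_nonneg.2 hUV) (by positivity)
  linear_combination h

lemma add_add_add_rpow_le {p x y z w : ℝ} (hp1 : 1 / 2 ≤ p) (hp2 : p ≤ 1)
    (h4p : (4 : ℝ) ^ p ≤ 3) (hx : 0 ≤ x) (hy : 0 ≤ y) (hw : 0 ≤ w) (hwz : w ≤ z)
    (hxy : x * y = z * w) :
    (x + y + z + w) ^ p ≤ x ^ p + y ^ p + z ^ p := by
  have hp0 : 0 ≤ p := by linarith
  obtain rfl | hz := (hw.trans hwz).eq_or_lt
  · obtain rfl : w = 0 := le_antisymm hwz hw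
    have hsub := rpow_add_le_add_rpow hx hy hp0 hp2
    have hzero := rpow_nonneg (le_refl (0 : ℝ)) p
    simp only [add_zero]
    linarith
  have hS : 0 ≤ x + y + z + w := by linarith
  have hsq : ∀ X : ℝ, 0 ≤ X → X ^ (2 * p) = (X ^ p) ^ 2 := fun X hX => by
    rw [mul_comm, ← rpow_mul_natCast hX]; norm_num
  have hstar : ∀ C : ℝ, 0 ≤ C → ((z + C) ^ p) ^ 2 ≤ (z ^ p) ^ 2 + (C ^ p) ^ 2 + z ^ p * C ^ p :=
    fun C hC => by
      simpa only [hsq _ hz.le, hsq _ hC, hsq _ (add_nonneg hz.le hC), mul_rpow hz.le hC]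
        using add_rpow_two_mul_le hp1 hp2 h4p hz.le hC
  have hUV : x ^ p * y ^ p ≤ (z ^ p) ^ 2 := by
    rw [← mul_rpow hx hy, hxy, sq, ← mul_rpow hz.le hz.le]
    gcongr
  have hfactor : z * (x + y + z + w) = (z + x) * (z + y) := by linear_combination -hxy
  have hsq_le : ((z * (x + y + z + w)) ^ p) ^ 2 ≤ (z ^ p * (x ^ p + y ^ p + z ^ p)) ^ 2 :=
    calc ((z * (x + y + z + w)) ^ p) ^ 2 = ((z + x) ^ p) ^ 2 * ((z + y) ^ p) ^ 2 := by
          rw [hfactor, mul_rpow (by positivity) (by positivity), mul_pow]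
      _ ≤ ((z ^ p) ^ 2 + (x ^ p) ^ 2 + z ^ p * x ^ p) *
            ((z ^ p) ^ 2 + (y ^ p) ^ 2 + z ^ p * y ^ p) :=
          mul_le_mul (hstar x hx) (hstar y hy) (by positivity) (by positivity)
      _ ≤ (z ^ p * (x ^ p + y ^ p + z ^ p)) ^ 2 :=
          mul_sq_add_sq_add_mul_le_sq (by positivity) (by positivity) (by positivity) hUV
  rw [pow_le_pow_iff_left₀ (by positivity) (by positivity) two_ne_zero, mul_rpow hz.le hS]
    at hsq_le
  exact le_of_mul_le_mul_left hsq_le (rpow_pos_of_pos hz p)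

theorem stmt_9 (p : ℝ) (hp : p = Real.logb 4 3) (a b c d : ℝ)
    (ha : 0 ≤ a) (hb : 0 ≤ b) (hc : 0 ≤ c) (hd : 0 ≤ d) :
    (a * d) ^ p + (b * c) ^ p + max ((a * c) ^ p) ((b * d) ^ p) ≥
      ((a + b) * (c + d)) ^ p := by
  have h4p : (4 : ℝ) ^ p = 3 := by
    rw [hp]; exact rpow_logb (by norm_num) (by norm_num) (by norm_num)
  have hp1 : 1 / 2 ≤ p := by
    rw [← rpow_le_rpow_left_iff (by norm_num : (1 : ℝ) < 4), h4p, ← sqrt_eq_rpow,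
      show (4 : ℝ) = 2 ^ 2 by norm_num, sqrt_sq (by norm_num)]
    norm_num
  have hp2 : p ≤ 1 := by
    rw [← rpow_le_rpow_left_iff (by norm_num : (1 : ℝ) < 4), h4p]
    norm_num
  wlog h : b * d ≤ a * c generalizing a b c d
  · have := this b a d c hb ha hd hc (le_of_not_ge h)
    rw [max_comm, show (b + a) * (d + c) = (a + b) * (c + d) by ring] at this
    linarith
  rw [ge_iff_le, max_eq_left (rpow_le_rpow (by positivity) h (by linarith))]
  convert add_add_add_rpow_le hp1 hp2 h4p.le (mul_nonneg ha hd) (mul_nonneg hb hc)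
    (mul_nonneg hb hd) h (by ring) using 2
  ring
end

section
/- For every n that is a power of two and every 0 ≤ k < n, there exists a set A of n real numbers with |A − A| = n^{log_2 3} such that every subset A' ⊆ A of size k satisfies |A' − A'| ≥ k^{log_2 3}. -/
open Pointwise

/-!
Take for `A` the `2 ^ m` numbers with `m` ternary digits, all `0` or `1`, and let `α = log₂ 3`.
Splitting by the leading digit, `A = A₀ ∪ (3 ^ m + A₀)`, so `A - A` is a union of three translates
of `A₀ - A₀` and `|A - A| ≤ 3 ^ m = n ^ α`. Everything else follows from the two-set bound
`(|B| |C|) ^ (α / 2) ≤ |B - C|` for `B, C ⊆ A`, proved by induction on `m`: for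
`B = B₀ ∪ (3 ^ m + B₁)` and `C = C₀ ∪ (3 ^ m + C₁)`, the set `B - C` is the disjoint union of the
bands `B₀ - C₁ - 3 ^ m`, `(B₀ - C₀) ∪ (B₁ - C₁)` and `B₁ - C₀ + 3 ^ m`, and the induction closes by
`((b₀ + b₁)(c₀ + c₁)) ^ β ≤ (b₀ c₁) ^ β + (b₁ c₀) ^ β + max ((b₀ c₀) ^ β) ((b₁ c₁) ^ β)`,
`β = α / 2`. Concavity of `t ↦ t ^ β` reduces this to `(1 + x) ^ α ≤ 1 + x ^ β + x ^ α`, that is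
`(2 cosh s) ^ α ≤ 1 + 2 cosh (α s)`, an equality at `s = 0` since `2 ^ α = 3`; the difference
is increasing in `s ≥ 0` by Bernoulli's inequality and weighted AM-GM.
-/

open Real Finset

lemma ConcaveOn.map_add_map_le_of_add_eq {s : Set ℝ} {f : ℝ → ℝ} (hf : ConcaveOn ℝ s f)
    {a b c d : ℝ} (ha : a ∈ s) (hd : d ∈ s) (hab : a ≤ b) (hbd : b ≤ d) (h : a + d = b + c) :
    f a + f d ≤ f b + f c := by
  rcases hab.eq_or_lt with rfl | hab
  · rw [show d = c by linarith]
  have hda : d - a ≠ 0 := by linarith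
  set l := (d - b) / (d - a)
  have hl₀ : 0 ≤ l := div_nonneg (by linarith) (by linarith)
  have hl₁ : 0 ≤ 1 - l := by
    rw [one_sub_div hda]; exact div_nonneg (by linarith) (by linarith)
  have hb : l * a + (1 - l) * d = b := by simp only [l]; field_simp; ring
  have hc : (1 - l) * a + l * d = c := by
    simp only [l]; field_simp; linear_combination (d - a) * h
  have h₁ := hf.2 ha hd hl₀ hl₁ (by ring)
  have h₂ := hf.2 ha hd hl₁ hl₀ (by ring)
  simp only [smul_eq_mul, hb, hc] at h₁ h₂
  linarith

namespace Finset

variable {G : Type*} [AddCommGroup G] [DecidableEq G]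

lemma vadd_finset_sub (t : G) (s u : Finset G) : (t +ᵥ s) - u = t +ᵥ (s - u) := by
  simp only [← singleton_add, add_sub_assoc]

lemma sub_vadd_finset (t : G) (s u : Finset G) : s - (t +ᵥ u) = -t +ᵥ (s - u) := by
  rw [← singleton_add, ← singleton_add, sub_add_eq_sub_sub_swap, sub_eq_add_neg, neg_singleton,
    add_comm]

lemma union_vadd_sub_union_vadd (t : G) (B₀ B₁ C₀ C₁ : Finset G) :
    (B₀ ∪ (t +ᵥ B₁)) - (C₀ ∪ (t +ᵥ C₁)) =
      (-t +ᵥ (B₀ - C₁)) ∪ ((B₀ - C₀) ∪ (B₁ - C₁)) ∪ (t +ᵥ (B₁ - C₀)) := by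
  simp only [union_sub, sub_union, vadd_finset_sub, sub_vadd_finset, vadd_finset_union,
    neg_vadd_vadd]
  ext x
  simp only [mem_union]
  tauto

end Finset

-- The `2 ^ m` numbers whose ternary expansion has `m` digits, all `0` or `1`.
noncomputable def cantorFinset : ℕ → Finset ℝ
  | 0 => {0}
  | m + 1 => cantorFinset m ∪ ((3:ℝ) ^ m +ᵥ cantorFinset m)

lemma cantorFinset_subset_Icc (m : ℕ) :
    (cantorFinset m : Set ℝ) ⊆ Set.Icc 0 ((3 ^ m - 1) / 2) := by
  induction m with
  | zero => simp [cantorFinset]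
  | succ m ih =>
    intro x hx
    simp only [cantorFinset, coe_union, coe_vadd_finset, Set.mem_union, Set.mem_vadd_set,
      vadd_eq_add] at hx
    have h3 : (0:ℝ) < 3 ^ m := by positivity
    rcases hx with hx | ⟨y, hy, rfl⟩
    · obtain ⟨h₀, h₁⟩ := ih hx
      constructor <;> [linarith; (rw [pow_succ]; linarith)]
    · obtain ⟨h₀, h₁⟩ := ih hy
      constructor <;> [linarith; (rw [pow_succ]; linarith)]

lemma abs_le_of_mem_sub_cantorFinset {m : ℕ} {B C : Finset ℝ} (hB : B ⊆ cantorFinset m)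
    (hC : C ⊆ cantorFinset m) {x : ℝ} (hx : x ∈ B - C) : |x| ≤ (3 ^ m - 1) / 2 := by
  obtain ⟨b, hb, c, hc, rfl⟩ := mem_sub.1 hx
  obtain ⟨hb₀, hb₁⟩ := cantorFinset_subset_Icc m (hB hb)
  obtain ⟨hc₀, hc₁⟩ := cantorFinset_subset_Icc m (hC hc)
  rw [abs_le]
  constructor <;> linarith

lemma disjoint_cantorFinset_vadd (m : ℕ) :
    Disjoint (cantorFinset m) ((3:ℝ) ^ m +ᵥ cantorFinset m) := by
  refine disjoint_left.2 fun x hx hx' ↦ ?_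
  obtain ⟨y, hy, rfl⟩ := mem_vadd_finset.1 hx'
  have := (cantorFinset_subset_Icc m hx).2
  have := (cantorFinset_subset_Icc m hy).1
  simp only [vadd_eq_add] at *
  linarith [pow_pos (by norm_num : (0:ℝ) < 3) m]

lemma card_cantorFinset (m : ℕ) : #(cantorFinset m) = 2 ^ m := by
  induction m with
  | zero => rfl
  | succ m ih =>
    rw [cantorFinset, card_union_of_disjoint (disjoint_cantorFinset_vadd m), card_vadd_finset, ih,
      pow_succ, mul_two]

lemma card_cantorFinset_sub_le (m : ℕ) : #(cantorFinset m - cantorFinset m) ≤ 3 ^ m := by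
  induction m with
  | zero => simp [cantorFinset]
  | succ m ih =>
    rw [cantorFinset, union_vadd_sub_union_vadd, union_self, pow_succ]
    grw [card_union_le, card_union_le]
    simp only [card_vadd_finset]
    omega

lemma exists_eq_union_vadd_of_subset_cantorFinset_succ {m : ℕ} {B : Finset ℝ}
    (hB : B ⊆ cantorFinset (m + 1)) :
    ∃ B₀ B₁, B₀ ⊆ cantorFinset m ∧ B₁ ⊆ cantorFinset m ∧
      B = B₀ ∪ ((3:ℝ) ^ m +ᵥ B₁) ∧ #B = #B₀ + #B₁ := by
  refine ⟨B ∩ cantorFinset m, -(3:ℝ) ^ m +ᵥ (B \ cantorFinset m), inter_subset_right, ?_, ?_, ?_⟩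
  · rw [← subset_vadd_finset_iff, sdiff_le_iff]
    exact hB
  · rw [vadd_neg_vadd, union_comm, sdiff_union_inter]
  · rw [card_vadd_finset, add_comm, card_sdiff_add_card_inter]

lemma card_union_vadd_sub_union_vadd_cantorFinset {m : ℕ} {B₀ B₁ C₀ C₁ : Finset ℝ}
    (hB₀ : B₀ ⊆ cantorFinset m) (hB₁ : B₁ ⊆ cantorFinset m) (hC₀ : C₀ ⊆ cantorFinset m)
    (hC₁ : C₁ ⊆ cantorFinset m) :
    #((B₀ ∪ ((3:ℝ) ^ m +ᵥ B₁)) - (C₀ ∪ ((3:ℝ) ^ m +ᵥ C₁))) =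
      #(B₀ - C₁) + #((B₀ - C₀) ∪ (B₁ - C₁)) + #(B₁ - C₀) := by
  have h3 : (1:ℝ) ≤ 3 ^ m := one_le_pow₀ (by norm_num)
  have hM : ∀ x ∈ (B₀ - C₀) ∪ (B₁ - C₁), |x| ≤ (3 ^ m - 1) / 2 := by
    intro x hx
    rcases mem_union.1 hx with hx | hx
    exacts [abs_le_of_mem_sub_cantorFinset hB₀ hC₀ hx, abs_le_of_mem_sub_cantorFinset hB₁ hC₁ hx]
  have hL : ∀ x ∈ -(3:ℝ) ^ m +ᵥ (B₀ - C₁), x < -((3 ^ m - 1) / 2) := by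
    intro x hx
    obtain ⟨y, hy, rfl⟩ := mem_vadd_finset.1 hx
    have := abs_le.1 (abs_le_of_mem_sub_cantorFinset hB₀ hC₁ hy)
    simp only [vadd_eq_add]
    linarith
  have hU : ∀ x ∈ (3:ℝ) ^ m +ᵥ (B₁ - C₀), (3 ^ m - 1) / 2 < x := by
    intro x hx
    obtain ⟨y, hy, rfl⟩ := mem_vadd_finset.1 hx
    have := abs_le.1 (abs_le_of_mem_sub_cantorFinset hB₁ hC₀ hy)
    simp only [vadd_eq_add]
    linarith
  rw [union_vadd_sub_union_vadd, card_union_of_disjoint, card_union_of_disjoint, card_vadd_finset,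
    card_vadd_finset]
  · exact disjoint_left.2 fun x hxL hxM ↦ by linarith [hL x hxL, (abs_le.1 (hM x hxM)).1]
  · refine disjoint_left.2 fun x hx hxU ↦ ?_
    rcases mem_union.1 hx with hxL | hxM
    · linarith [hL x hxL, hU x hxU]
    · linarith [hU x hxU, (abs_le.1 (hM x hxM)).2]

section

variable {α : ℝ}

lemma le_two_of_two_rpow_le_three (hα : (2:ℝ) ^ α ≤ 3) : α ≤ 2 := by
  refine ((rpow_lt_rpow_left_iff one_lt_two).1 ?_).le
  norm_num
  linarith

lemma one_sub_mul_one_add_rpow_le (hα₁ : 1 ≤ α) (hα₂ : α ≤ 2) {t : ℝ} (ht₀ : 0 ≤ t)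
    (ht₁ : t ≤ 1) : (1 - t) * (1 + t) ^ (α - 1) ≤ 1 - t ^ α := by
  have bernoulli : (1 + t) ^ (α - 1) ≤ 1 + (α - 1) * t :=
    rpow_one_add_le_one_add_mul_self (by linarith) (by linarith) (by linarith)
  have amgm : t ^ α ≤ (2 - α) * t + (α - 1) * t ^ 2 :=
    calc t ^ α = t ^ (2 - α) * (t ^ 2) ^ (α - 1) := by
          rw [← rpow_natCast, ← rpow_mul ht₀, ← rpow_add' ht₀ (by push_cast; linarith)]
          congr 1; push_cast; ring
      _ ≤ _ := geom_mean_le_arith_mean2_weighted (by linarith) (by linarith) ht₀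
          (by positivity) (by ring)
  nlinarith [mul_le_mul_of_nonneg_left bernoulli (sub_nonneg.2 ht₁)]

lemma sinh_mul_two_cosh_rpow_le (hα₁ : 1 ≤ α) (hα₂ : α ≤ 2) {s : ℝ} (hs : 0 ≤ s) :
    sinh s * (2 * cosh s) ^ (α - 1) ≤ sinh (α * s) := by
  set t := exp (-(2 * s))
  have hsinh : sinh s = exp s * (1 - t) / 2 := by
    rw [sinh_eq, mul_sub, ← exp_add]; ring_nf
  have hcosh : 2 * cosh s = exp s * (1 + t) := by
    rw [cosh_eq, mul_add, ← exp_add]; ring_nf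
  have hsinhα : sinh (α * s) = exp (α * s) * (1 - t ^ α) / 2 := by
    rw [sinh_eq, ← exp_mul, mul_sub, ← exp_add]; ring_nf
  have key := one_sub_mul_one_add_rpow_le hα₁ hα₂ (exp_nonneg _)
    (exp_le_one_iff.2 (by linarith) : t ≤ 1)
  calc sinh s * (2 * cosh s) ^ (α - 1)
      = exp (α * s) * ((1 - t) * (1 + t) ^ (α - 1)) / 2 := by
        rw [hsinh, hcosh, mul_rpow (exp_nonneg s) (by positivity), ← exp_mul,
          show α * s = s + s * (α - 1) by ring, exp_add]
        ring
    _ ≤ sinh (α * s) := by rw [hsinhα]; gcongr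

lemma two_cosh_rpow_le (hα₁ : 1 ≤ α) (hα₃ : (2:ℝ) ^ α ≤ 3) (s : ℝ) :
    (2 * cosh s) ^ α ≤ 1 + 2 * cosh (α * s) := by
  set P : ℝ → ℝ := fun s ↦ 1 + 2 * cosh (α * s) - (2 * cosh s) ^ α
  have hP : ∀ s, HasDerivAt P (2 * α * (sinh (α * s) - sinh s * (2 * cosh s) ^ (α - 1))) s :=
    fun s ↦ ((((hasDerivAt_id' s).const_mul α).cosh.const_mul 2 |>.const_add 1).sub
      (((hasDerivAt_cosh s).const_mul 2).rpow_const (Or.inr hα₁))).congr_deriv (by ring)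
  have hmono : MonotoneOn P (Set.Ici 0) := by
    refine monotoneOn_of_deriv_nonneg (convex_Ici 0)
      (fun x _ ↦ (hP x).continuousAt.continuousWithinAt)
      (fun x _ ↦ (hP x).differentiableAt.differentiableWithinAt) fun x hx ↦ ?_
    rw [interior_Ici, Set.mem_Ioi] at hx
    rw [(hP x).deriv]
    exact mul_nonneg (by linarith) (sub_nonneg.2
      (sinh_mul_two_cosh_rpow_le hα₁ (le_two_of_two_rpow_le_three hα₃) hx.le))
  have hP₀ : 0 ≤ P 0 := by simp [P]; linarith
  have := hP₀.trans (hmono Set.self_mem_Ici (abs_nonneg s) (abs_nonneg s))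
  rw [← cosh_abs (α * s), abs_mul, abs_of_nonneg (by linarith : 0 ≤ α), ← cosh_abs s]
  linarith

lemma one_add_rpow_le (hα₁ : 1 ≤ α) (hα₃ : (2:ℝ) ^ α ≤ 3) {x : ℝ} (hx : 0 ≤ x) :
    (1 + x) ^ α ≤ 1 + x ^ (α / 2) + x ^ α := by
  rcases hx.eq_or_lt with rfl | hx
  · simp [zero_rpow (by linarith : α ≠ 0), zero_rpow (by linarith : α / 2 ≠ 0)]
  obtain ⟨s, rfl⟩ : ∃ s, x = exp (2 * s) :=
    ⟨log x / 2, by rw [mul_div_cancel₀ _ two_ne_zero, exp_log hx]⟩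
  have h₁ : 1 + exp (2 * s) = exp s * (2 * cosh s) := by
    rw [cosh_eq, mul_div_cancel₀ _ two_ne_zero, mul_add, ← exp_add, ← exp_add, add_neg_cancel,
      exp_zero, ← two_mul, add_comm]
  calc (1 + exp (2 * s)) ^ α = exp (s * α) * (2 * cosh s) ^ α := by
        rw [h₁, mul_rpow (exp_nonneg s) (by positivity), exp_mul]
    _ ≤ exp (s * α) * (1 + 2 * cosh (α * s)) := by gcongr; exact two_cosh_rpow_le hα₁ hα₃ s
    _ = 1 + exp (2 * s) ^ (α / 2) + exp (2 * s) ^ α := by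
        rw [← exp_mul, ← exp_mul, cosh_eq, mul_div_cancel₀ _ two_ne_zero, mul_add, mul_add,
          mul_one, ← exp_add, ← exp_add]
        ring_nf
        rw [exp_zero]
        ring

lemma one_add_mul_one_add_rpow_le (hα₁ : 1 ≤ α) (hα₃ : (2:ℝ) ^ α ≤ 3) {x y : ℝ}
    (hx : 0 ≤ x) (hy : 0 ≤ y) (hxy : x * y ≤ 1) :
    ((1 + x) * (1 + y)) ^ (α / 2) ≤ 1 + x ^ (α / 2) + y ^ (α / 2) := by
  set β := α / 2 with hβ
  have hβ₀ : 0 ≤ β := by positivity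
  have hβ₁ : β ≤ 1 := by linarith [le_two_of_two_rpow_le_three hα₃]
  -- Concavity trades `y` for the extreme value `1 / x`, where `(1 + x) * (1 + y) = (1 + x) ^ 2 / x`.
  have hconc : (x * y) ^ β + (1 + y) ^ β ≤ 1 ^ β + (x * y + y) ^ β :=
    (concaveOn_rpow hβ₀ hβ₁).map_add_map_le_of_add_eq (by positivity : 0 ≤ x * y)
      (by positivity : 0 ≤ 1 + y) hxy (by linarith) (by ring)
  have hsub : (1 + x) ^ β ≤ 1 + x ^ β := by
    simpa using rpow_add_le_add_rpow zero_le_one hx hβ₀ hβ₁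
  have hkey : ((1 + x) ^ 2) ^ β ≤ 1 + x ^ β + (x ^ β) ^ 2 := by
    rw [← rpow_natCast, ← rpow_mul (by positivity), ← rpow_natCast, ← rpow_mul hx]
    convert one_add_rpow_le hα₁ hα₃ hx using 3 <;> push_cast <;> ring
  have hxyβ : x ^ β * y ^ β ≤ 1 := by
    rw [← mul_rpow hx hy]; exact rpow_le_one (by positivity) hxy hβ₀
  rw [one_rpow, mul_rpow hx hy] at hconc
  calc ((1 + x) * (1 + y)) ^ β = (1 + x) ^ β * (1 + y) ^ β :=
        mul_rpow (by positivity) (by positivity)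
    _ ≤ (1 + x) ^ β * (1 - x ^ β * y ^ β + (x * y + y) ^ β) := by gcongr; linarith
    _ = (1 + x) ^ β * (1 - x ^ β * y ^ β) + y ^ β * ((1 + x) ^ 2) ^ β := by
        have e : (1 + x) ^ β * (x * y + y) ^ β = y ^ β * ((1 + x) ^ 2) ^ β := by
          rw [← mul_rpow (by positivity) (by positivity), ← mul_rpow hy (by positivity)]
          ring_nf
        rw [mul_add, e]
    _ ≤ (1 + x ^ β) * (1 - x ^ β * y ^ β) + y ^ β * (1 + x ^ β + (x ^ β) ^ 2) := by gcongr
    _ = 1 + x ^ β + y ^ β := by ring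

lemma rpow_add_mul_add_le_of_mul_le (hα₁ : 1 ≤ α) (hα₃ : (2:ℝ) ^ α ≤ 3)
    {b₀ b₁ c₀ c₁ : ℝ} (hb₀ : 0 ≤ b₀) (hb₁ : 0 ≤ b₁) (hc₀ : 0 ≤ c₀) (hc₁ : 0 ≤ c₁)
    (h : b₁ * c₁ ≤ b₀ * c₀) :
    ((b₀ + b₁) * (c₀ + c₁)) ^ (α / 2) ≤
      (b₀ * c₁) ^ (α / 2) + (b₁ * c₀) ^ (α / 2) + (b₀ * c₀) ^ (α / 2) := by
  have hβ₀ : 0 ≤ α / 2 := by linarith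
  rcases (mul_nonneg hb₀ hc₀).eq_or_lt with h₀ | h₀
  · have h₁ : b₁ * c₁ = 0 := le_antisymm (h₀ ▸ h) (mul_nonneg hb₁ hc₁)
    calc ((b₀ + b₁) * (c₀ + c₁)) ^ (α / 2) = (b₀ * c₁ + b₁ * c₀) ^ (α / 2) := by
          congr 1; linear_combination h₁ - h₀
      _ ≤ (b₀ * c₁) ^ (α / 2) + (b₁ * c₀) ^ (α / 2) :=
          rpow_add_le_add_rpow (by positivity) (by positivity) hβ₀
            (by linarith [le_two_of_two_rpow_le_three hα₃])
      _ ≤ _ := le_add_of_nonneg_right (by positivity)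
  have hb₀' : 0 < b₀ := hb₀.lt_of_ne (left_ne_zero_of_mul h₀.ne').symm
  have hc₀' : 0 < c₀ := hc₀.lt_of_ne (right_ne_zero_of_mul h₀.ne').symm
  have hxy : b₁ / b₀ * (c₁ / c₀) ≤ 1 := by
    rw [div_mul_div_comm, div_le_one h₀]; exact h
  calc ((b₀ + b₁) * (c₀ + c₁)) ^ (α / 2)
      = (b₀ * c₀) ^ (α / 2) * ((1 + b₁ / b₀) * (1 + c₁ / c₀)) ^ (α / 2) := by
        rw [← mul_rpow h₀.le (by positivity)]; congr 1; field_simp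
    _ ≤ (b₀ * c₀) ^ (α / 2) * (1 + (b₁ / b₀) ^ (α / 2) + (c₁ / c₀) ^ (α / 2)) := by
        gcongr
        exact one_add_mul_one_add_rpow_le hα₁ hα₃ (by positivity) (by positivity) hxy
    _ = (b₀ * c₁) ^ (α / 2) + (b₁ * c₀) ^ (α / 2) + (b₀ * c₀) ^ (α / 2) := by
        rw [mul_add, mul_add, ← mul_rpow h₀.le (by positivity), ← mul_rpow h₀.le (by positivity)]
        field_simp
        ring

lemma rpow_add_mul_add_le (hα₁ : 1 ≤ α) (hα₃ : (2:ℝ) ^ α ≤ 3)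
    {b₀ b₁ c₀ c₁ : ℝ} (hb₀ : 0 ≤ b₀) (hb₁ : 0 ≤ b₁) (hc₀ : 0 ≤ c₀) (hc₁ : 0 ≤ c₁) :
    ((b₀ + b₁) * (c₀ + c₁)) ^ (α / 2) ≤ (b₀ * c₁) ^ (α / 2) + (b₁ * c₀) ^ (α / 2) +
      max ((b₀ * c₀) ^ (α / 2)) ((b₁ * c₁) ^ (α / 2)) := by
  rcases le_total (b₁ * c₁) (b₀ * c₀) with h | h
  · linarith [rpow_add_mul_add_le_of_mul_le hα₁ hα₃ hb₀ hb₁ hc₀ hc₁ h,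
      le_max_left ((b₀ * c₀) ^ (α / 2)) ((b₁ * c₁) ^ (α / 2))]
  · have := rpow_add_mul_add_le_of_mul_le hα₁ hα₃ hb₁ hb₀ hc₁ hc₀ h
    rw [add_comm b₁, add_comm c₁] at this
    linarith [le_max_right ((b₀ * c₀) ^ (α / 2)) ((b₁ * c₁) ^ (α / 2))]

theorem rpow_card_mul_card_le_card_sub (hα₁ : 1 ≤ α) (hα₃ : (2:ℝ) ^ α ≤ 3) (m : ℕ)
    {B C : Finset ℝ} (hB : B ⊆ cantorFinset m) (hC : C ⊆ cantorFinset m) :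
    ((#B : ℝ) * #C) ^ (α / 2) ≤ #(B - C) := by
  induction m generalizing B C with
  | zero =>
    have hβ : α / 2 ≠ 0 := by linarith
    obtain rfl | rfl := subset_singleton_iff.1 hB
    · simp [zero_rpow hβ]
    obtain rfl | rfl := subset_singleton_iff.1 hC
    · simp [zero_rpow hβ]
    · simp
  | succ m ih =>
    obtain ⟨B₀, B₁, hB₀, hB₁, rfl, hBcard⟩ := exists_eq_union_vadd_of_subset_cantorFinset_succ hB
    obtain ⟨C₀, C₁, hC₀, hC₁, rfl, hCcard⟩ := exists_eq_union_vadd_of_subset_cantorFinset_succ hC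
    rw [card_union_vadd_sub_union_vadd_cantorFinset hB₀ hB₁ hC₀ hC₁, hBcard, hCcard]
    push_cast
    calc ((#B₀ + #B₁ : ℝ) * (#C₀ + #C₁)) ^ (α / 2)
        ≤ ((#B₀ : ℝ) * #C₁) ^ (α / 2) + ((#B₁ : ℝ) * #C₀) ^ (α / 2) +
            max (((#B₀ : ℝ) * #C₀) ^ (α / 2)) (((#B₁ : ℝ) * #C₁) ^ (α / 2)) :=
          rpow_add_mul_add_le hα₁ hα₃ (by positivity) (by positivity) (by positivity)
            (by positivity)
      _ ≤ #(B₀ - C₁) + #(B₁ - C₀) + #((B₀ - C₀) ∪ (B₁ - C₁)) := by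
          gcongr
          · exact ih hB₀ hC₁
          · exact ih hB₁ hC₀
          · exact max_le ((ih hB₀ hC₀).trans (mod_cast card_le_card subset_union_left))
              ((ih hB₁ hC₁).trans (mod_cast card_le_card subset_union_right))
      _ = #(B₀ - C₁) + #((B₀ - C₀) ∪ (B₁ - C₁)) + #(B₁ - C₀) := by ring

end

theorem stmt_12_general (n k m : ℕ) (hn : n = 2 ^ m) :
    ∃ A : Finset ℝ, A.card = n ∧ ((A - A).card : ℝ) = (n : ℝ) ^ Real.logb 2 3 ∧
      ∀ A' ⊆ A, A'.card = k → ((A' - A').card : ℝ) ≥ (k : ℝ) ^ Real.logb 2 3 := by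
  set α := logb 2 3
  have hα₃ : (2:ℝ) ^ α = 3 := rpow_logb two_pos one_lt_two.ne' three_pos
  have hα₁ : 1 ≤ α := (le_logb_iff_rpow_le one_lt_two three_pos).2 (by norm_num)
  have hsq : ∀ a : ℕ, ((a : ℝ) * a) ^ (α / 2) = (a : ℝ) ^ α := fun a ↦ by
    rw [← sq, ← rpow_natCast, ← rpow_mul (Nat.cast_nonneg a)]; push_cast; ring_nf
  have hn' : (n : ℝ) ^ α = 3 ^ m := by
    rw [hn, Nat.cast_pow, Nat.cast_ofNat, ← rpow_natCast, ← rpow_mul two_pos.le, mul_comm,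
      rpow_mul two_pos.le, hα₃, rpow_natCast]
  refine ⟨cantorFinset m, (card_cantorFinset m).trans hn.symm, le_antisymm ?_ ?_, ?_⟩
  · rw [hn']; exact_mod_cast card_cantorFinset_sub_le m
  · have h := rpow_card_mul_card_le_card_sub hα₁ hα₃.le m subset_rfl subset_rfl
    rwa [card_cantorFinset, ← hn, hsq] at h
  · rintro A' hA' rfl
    rw [ge_iff_le, ← hsq]
    exact rpow_card_mul_card_le_card_sub hα₁ hα₃.le m hA' hA'

theorem stmt_12 (n k m : ℕ) (hn : n = 2 ^ m) (hk : k < n) :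
    ∃ A : Finset ℝ, A.card = n ∧ ((A - A).card : ℝ) = (n : ℝ) ^ Real.logb 2 3 ∧
      ∀ A' ⊆ A, A'.card = k → ((A' - A').card : ℝ) ≥ (k : ℝ) ^ Real.logb 2 3 :=
  stmt_12_general n k m hn
end

section
/- For every n ≥ k > 0 with n a power of two, there exists a set of n points in the plane spanning at most n^{log_2 3} distinct distances such that every k of the points span at least k^{log_2 3}/2 − 1 distinct distances. -/
/-!
Take the points `A_m = {0, 1} + {0, 3} + ⋯ + {0, 3 ^ (m - 1)}` on a line: `2 ^ m` points, and
`A_m - A_m = {-1, 0, 1} + ⋯ + {-3 ^ (m - 1), 0, 3 ^ (m - 1)}` has at most `3 ^ m` elements.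

For the lower bound, `#(A - B) ≥ (#A * #B) ^ γ` with `γ = log₄ 3` for all `A, B ⊆ A_m`, by
induction on `m`. Write `A = A₀ ∪ (A₁ + 3 ^ m)` and `B = B₀ ∪ (B₁ + 3 ^ m)` with the `Aᵢ, Bᵢ ⊆ A_m`;
then `A₀ - B₁ - 3 ^ m`, `(A₀ - B₀) ∪ (A₁ - B₁)` and `A₁ - B₀ + 3 ^ m` lie in disjoint intervals, and
the induction closes by
`((a₀ + a₁) (b₀ + b₁)) ^ γ ≤ max ((a₀ b₀) ^ γ) ((a₁ b₁) ^ γ) + (a₀ b₁) ^ γ + (a₁ b₀) ^ γ`.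
Normalising `a₀ b₀ ≥ a₁ b₁` to `1`, this becomes `(1 + b ^ κ) (1 + q ^ κ) ≤ (1 + b + q) ^ κ` for
`b q ≤ 1`, `κ = log₃ 4`, which follows from `(1 + x ^ κ) ^ 2 ≤ (1 + x + x ^ 2) ^ κ` and
`(1 + b + b²) (1 + q + q²) ≤ (1 + b + q) ^ 2`. For `A = B = T` this gives
`#(T - T) ≥ k ^ log₂ 3`, and every distance accounts for just two nonzero differences.
-/

open Finset Real Pointwise

section

local notation "κ" => logb 3 4
local notation "γ" => logb 4 3

lemma div_le_logb_three_four {p q : ℕ} (hq : 0 < q) (h : (3 : ℝ) ^ p ≤ 4 ^ q) :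
    (p / q : ℝ) ≤ κ := by
  have hlog := log_le_log (by positivity) h
  rw [log_pow, log_pow] at hlog
  rw [logb, div_le_div_iff₀ (by positivity) (log_pos (by norm_num))]
  linarith

lemma logb_three_four_le_div {p q : ℕ} (hq : 0 < q) (h : (4 : ℝ) ^ q ≤ 3 ^ p) :
    κ ≤ p / q := by
  have hlog := log_le_log (by positivity) h
  rw [log_pow, log_pow] at hlog
  rw [logb, div_le_div_iff₀ (log_pos (by norm_num)) (by positivity)]
  linarith

lemma five_fourths_le_logb_three_four : 5 / 4 ≤ κ := by
  exact_mod_cast div_le_logb_three_four (p := 5) (q := 4) (by norm_num) (by norm_num)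

lemma logb_three_four_le_nine_sevenths : κ ≤ 9 / 7 := by
  exact_mod_cast logb_three_four_le_div (p := 9) (q := 7) (by norm_num) (by norm_num)

lemma rpow_inv_natCast_pow_eq_rpow_div {x : ℝ} (hx : 0 ≤ x) (n : ℕ) (p : ℕ) :
    (x ^ ((n : ℝ)⁻¹)) ^ p = x ^ ((p : ℝ) / n) := by
  rw [← rpow_natCast, ← rpow_mul hx, inv_mul_eq_div]

lemma one_add_rpow_sq_le_of_le_quarter {x : ℝ} (hx0 : 0 ≤ x) (hx : x ≤ 1 / 4) :
    (1 + x ^ κ) ^ 2 ≤ (1 + x + x ^ 2) ^ κ := by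
  have hκ := five_fourths_le_logb_three_four
  set s := x ^ ((4 : ℕ) : ℝ)⁻¹
  have hs0 : 0 ≤ s := rpow_nonneg hx0 _
  have hx_eq : x = s ^ 4 := by rw [rpow_inv_natCast_pow_eq_rpow_div hx0]; norm_num
  have hs2 : s ^ 2 ≤ 1 / 2 := by nlinarith
  have hxκ : x ^ κ ≤ s ^ 5 := by
    rw [rpow_inv_natCast_pow_eq_rpow_div hx0]
    exact rpow_le_rpow_of_exponent_ge' hx0 (by linarith) (by norm_num) (by norm_num; linarith)
  have hpoly : 2 * s + s ^ 6 ≤ 5 / 4 * (1 + s ^ 4) := by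
    nlinarith [sq_nonneg (s - 0.7), sq_nonneg (s ^ 2 - 1 / 2), mul_nonneg hs0 (sq_nonneg (s - 0.7)),
      sq_nonneg (s ^ 3 - 0.35), mul_nonneg (sub_nonneg.2 hs2) hs0]
  calc (1 + x ^ κ) ^ 2 ≤ (1 + s ^ 5) ^ 2 := by gcongr
    _ ≤ 1 + κ * (x + x ^ 2) := by
      rw [hx_eq]
      nlinarith [mul_le_mul_of_nonneg_left hpoly (pow_nonneg hs0 4),
        mul_le_mul_of_nonneg_right hκ (by positivity : 0 ≤ s ^ 4 + (s ^ 4) ^ 2)]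
    _ ≤ (1 + x + x ^ 2) ^ κ := by
      rw [add_assoc]
      exact one_add_mul_self_le_rpow_one_add (by nlinarith) (by linarith)

lemma one_add_two_mul_le_rpow_mul {x : ℝ} (hx0 : 1 / 4 ≤ x) (hx1 : x ≤ 1) :
    1 + 2 * x ≤ x ^ (κ - 1) * (2 + x) := by
  have hx : 0 ≤ x := by linarith
  set t := x ^ ((7 : ℕ) : ℝ)⁻¹
  have ht0 : 0 ≤ t := rpow_nonneg hx _
  have hx_eq : x = t ^ 7 := by rw [rpow_inv_natCast_pow_eq_rpow_div hx]; norm_num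
  have ht1 : t ≤ 1 := rpow_le_one hx hx1 (by positivity)
  have ht : 0.82 ≤ t := le_of_pow_le_pow_left₀ (n := 7) (by norm_num) ht0 (by linarith)
  have hxκ : t ^ 2 ≤ x ^ (κ - 1) := by
    rw [rpow_inv_natCast_pow_eq_rpow_div hx]
    exact rpow_le_rpow_of_exponent_ge' hx hx1 (by linarith [five_fourths_le_logb_three_four])
      (by norm_num; linarith [logb_three_four_le_nine_sevenths])
  have a := mul_nonneg (sub_nonneg.2 ht1) (sub_nonneg.2 ht)
  have hpoly : 0 ≤ -t ^ 8 - t ^ 7 + t ^ 6 + t ^ 5 + t ^ 4 + t ^ 3 + t ^ 2 - t - 1 := by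
    nlinarith [mul_nonneg a ht0, mul_nonneg a (pow_nonneg ht0 2), mul_nonneg a (pow_nonneg ht0 3),
      mul_nonneg a (pow_nonneg ht0 4), mul_nonneg a (pow_nonneg ht0 5),
      mul_nonneg a (pow_nonneg ht0 6), pow_le_one₀ ht0 ht1 (n := 5)]
  calc 1 + 2 * x ≤ t ^ 2 * (2 + x) := by
        rw [hx_eq]; nlinarith [mul_nonneg (sub_nonneg.2 ht1) hpoly]
    _ ≤ x ^ (κ - 1) * (2 + x) := by gcongr

lemma antitoneOn_log_gap :
    AntitoneOn (fun x => κ * log (1 + x + x ^ 2) - 2 * log (1 + x ^ κ)) (Set.Icc (1 / 4) 1) := by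
  have hderiv : ∀ x : ℝ, 0 < x → HasDerivAt (fun x => κ * log (1 + x + x ^ 2) - 2 * log (1 + x ^ κ))
      (κ * ((1 + 2 * x) / (1 + x + x ^ 2)) - 2 * (κ * x ^ (κ - 1) / (1 + x ^ κ))) x := by
    intro x hx
    have hquad : HasDerivAt (fun y : ℝ => 1 + y + y ^ 2) (1 + 2 * x) x := by
      exact (((hasDerivAt_id x).const_add 1).add (hasDerivAt_pow 2 x)).congr_deriv (by norm_num)
    have hpow : HasDerivAt (fun y : ℝ => 1 + y ^ κ) (κ * x ^ (κ - 1)) x :=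
      (hasDerivAt_rpow_const (Or.inl hx.ne')).const_add 1
    exact ((hquad.log (by positivity)).const_mul κ).sub ((hpow.log (by positivity)).const_mul 2)
  refine antitoneOn_of_hasDerivWithinAt_nonpos (convex_Icc _ _)
    (fun x hx => (hderiv x (by linarith [hx.1])).continuousAt.continuousWithinAt)
    (fun x hx => (hderiv x ?_).hasDerivWithinAt) fun x hx => ?_
  · rw [interior_Icc] at hx; linarith [hx.1]
  rw [interior_Icc] at hx
  have hx0 : 0 < x := by linarith [hx.1]
  have hy := rpow_pos_of_pos hx0 (κ - 1)
  have hxκ : x ^ κ = x * x ^ (κ - 1) := by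
    rw [← rpow_one_add' hx0.le (by linarith [five_fourths_le_logb_three_four])]; ring_nf
  have key := one_add_two_mul_le_rpow_mul hx.1.le hx.2.le
  have hκ : 0 ≤ κ := by linarith [five_fourths_le_logb_three_four]
  rw [sub_nonpos, hxκ, mul_div_assoc, ← mul_assoc, mul_comm 2 κ, mul_assoc]
  gcongr
  rw [← mul_div_assoc, div_le_div_iff₀ (by positivity) (by positivity)]
  nlinarith

lemma one_add_rpow_sq_le_of_quarter_le {x : ℝ} (hx0 : 1 / 4 ≤ x) (hx1 : x ≤ 1) :
    (1 + x ^ κ) ^ 2 ≤ (1 + x + x ^ 2) ^ κ := by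
  have hx : 0 < x := by linarith
  have hgap := antitoneOn_log_gap ⟨hx0, hx1⟩ ⟨by norm_num, le_rfl⟩ hx1
  have h3 : κ * log 3 = 2 * log 2 := by
    rw [← log_rpow (by norm_num), rpow_logb (by norm_num) (by norm_num) (by norm_num),
      show (4 : ℝ) = 2 ^ 2 by norm_num, log_pow]
    norm_num
  simp only [one_rpow] at hgap
  norm_num at hgap
  rw [← log_le_log_iff (by positivity) (by positivity), log_rpow (by positivity), log_pow]
  push_cast
  linarith

lemma one_add_rpow_sq_le_of_le_one {x : ℝ} (hx0 : 0 ≤ x) (hx1 : x ≤ 1) :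
    (1 + x ^ κ) ^ 2 ≤ (1 + x + x ^ 2) ^ κ := by
  rcases le_total x (1 / 4) with hx | hx
  · exact one_add_rpow_sq_le_of_le_quarter hx0 hx
  · exact one_add_rpow_sq_le_of_quarter_le hx hx1

lemma one_add_rpow_sq_le {x : ℝ} (hx : 0 ≤ x) : (1 + x ^ κ) ^ 2 ≤ (1 + x + x ^ 2) ^ κ := by
  rcases le_total x 1 with hx1 | hx1
  · exact one_add_rpow_sq_le_of_le_one hx hx1
  have hxpos : 0 < x := by linarith
  have hxκ : 0 < x ^ κ := rpow_pos_of_pos hxpos κ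
  -- the inequality is invariant under `x ↦ x⁻¹` after multiplying through by `x ^ (2 * κ)`
  have hinv := one_add_rpow_sq_le_of_le_one (inv_nonneg.2 hx) (inv_le_one_of_one_le₀ hx1)
  calc (1 + x ^ κ) ^ 2 = (x ^ κ) ^ 2 * (1 + x⁻¹ ^ κ) ^ 2 := by
        rw [inv_rpow hx]; field_simp; ring
    _ ≤ (x ^ κ) ^ 2 * (1 + x⁻¹ + x⁻¹ ^ 2) ^ κ := by gcongr
    _ = (1 + x + x ^ 2) ^ κ := by
        rw [rpow_pow_comm hx, ← mul_rpow (by positivity) (by positivity)]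
        congr 1; field_simp; ring

lemma one_add_rpow_mul_one_add_rpow_le {b q : ℝ} (hb : 0 ≤ b) (hq : 0 ≤ q) (hbq : b * q ≤ 1) :
    (1 + b ^ κ) * (1 + q ^ κ) ≤ (1 + b + q) ^ κ := by
  have hκ : 0 ≤ κ := by linarith [five_fourths_le_logb_three_four]
  have hquad : (1 + b + b ^ 2) * (1 + q + q ^ 2) ≤ (1 + b + q) ^ 2 := by
    nlinarith [mul_nonneg (sub_nonneg.2 hbq) (by positivity : 0 ≤ b + q + b * q)]
  refine le_of_pow_le_pow_left₀ two_ne_zero (by positivity) ?_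
  calc ((1 + b ^ κ) * (1 + q ^ κ)) ^ 2 = (1 + b ^ κ) ^ 2 * (1 + q ^ κ) ^ 2 := mul_pow _ _ _
    _ ≤ (1 + b + b ^ 2) ^ κ * (1 + q + q ^ 2) ^ κ := by
        gcongr
        exacts [one_add_rpow_sq_le hb, one_add_rpow_sq_le hq]
    _ = ((1 + b + b ^ 2) * (1 + q + q ^ 2)) ^ κ := (mul_rpow (by positivity) (by positivity)).symm
    _ ≤ ((1 + b + q) ^ 2) ^ κ := by gcongr
    _ = ((1 + b + q) ^ κ) ^ 2 := (rpow_pow_comm (by positivity) _ _).symm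

lemma logb_three_four_mul_logb_four_three : κ * γ = 1 := by
  rw [mul_logb (by norm_num) (by norm_num) (by norm_num), logb_self_eq_one (by norm_num)]

lemma logb_four_three_nonneg : 0 ≤ γ := logb_nonneg (by norm_num) (by norm_num)

lemma logb_four_three_le_one : γ ≤ 1 := by
  rw [logb_le_iff_le_rpow (by norm_num) (by norm_num)]; norm_num

lemma one_add_mul_one_add_rpow_le_s17 {s t : ℝ} (hs : 0 ≤ s) (ht : 0 ≤ t) (hst : s * t ≤ 1) :
    ((1 + s) * (1 + t)) ^ γ ≤ 1 + s ^ γ + t ^ γ := by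
  have hγ := logb_four_three_nonneg
  have hκγ := logb_three_four_mul_logb_four_three
  have hs' : (s ^ γ) ^ κ = s := by rw [← rpow_mul hs, mul_comm, hκγ, rpow_one]
  have ht' : (t ^ γ) ^ κ = t := by rw [← rpow_mul ht, mul_comm, hκγ, rpow_one]
  have h := one_add_rpow_mul_one_add_rpow_le (rpow_nonneg hs γ) (rpow_nonneg ht γ)
    (by rw [← mul_rpow hs ht]; exact rpow_le_one (by positivity) hst hγ)
  rw [hs', ht'] at h
  calc ((1 + s) * (1 + t)) ^ γ ≤ ((1 + s ^ γ + t ^ γ) ^ κ) ^ γ := by gcongr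
    _ = 1 + s ^ γ + t ^ γ := by rw [← rpow_mul (by positivity), hκγ, rpow_one]

lemma rpow_add_mul_add_le_of_mul_le_s17 {a₀ a₁ b₀ b₁ : ℝ} (ha₀ : 0 ≤ a₀) (ha₁ : 0 ≤ a₁)
    (hb₀ : 0 ≤ b₀) (hb₁ : 0 ≤ b₁) (hle : a₁ * b₁ ≤ a₀ * b₀) :
    ((a₀ + a₁) * (b₀ + b₁)) ^ γ ≤ (a₀ * b₀) ^ γ + (a₀ * b₁) ^ γ + (a₁ * b₀) ^ γ := by
  have hγ := logb_four_three_nonneg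
  rcases (mul_nonneg ha₀ hb₀).eq_or_lt with h₀ | h₀
  · have h₁ : a₁ * b₁ = 0 := le_antisymm (h₀ ▸ hle) (mul_nonneg ha₁ hb₁)
    have hexp : (a₀ + a₁) * (b₀ + b₁) = a₀ * b₁ + a₁ * b₀ := by linear_combination h₀.symm + h₁
    rw [hexp]
    linarith [rpow_add_le_add_rpow (mul_nonneg ha₀ hb₁) (mul_nonneg ha₁ hb₀) hγ
      logb_four_three_le_one, rpow_nonneg (mul_nonneg ha₀ hb₀) γ]
  have ha₀' : 0 < a₀ := pos_of_mul_pos_left h₀ hb₀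
  have hb₀' : 0 < b₀ := pos_of_mul_pos_right h₀ ha₀
  have key := one_add_mul_one_add_rpow_le_s17 (div_nonneg ha₁ ha₀) (div_nonneg hb₁ hb₀)
    (by rw [div_mul_div_comm, div_le_one h₀]; exact hle)
  calc ((a₀ + a₁) * (b₀ + b₁)) ^ γ = (a₀ * b₀) ^ γ * ((1 + a₁ / a₀) * (1 + b₁ / b₀)) ^ γ := by
        rw [← mul_rpow h₀.le (by positivity)]; congr 1; field_simp
    _ ≤ (a₀ * b₀) ^ γ * (1 + (a₁ / a₀) ^ γ + (b₁ / b₀) ^ γ) := by gcongr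
    _ = (a₀ * b₀) ^ γ + (a₀ * b₁) ^ γ + (a₁ * b₀) ^ γ := by
        rw [mul_add, mul_add, mul_one, ← mul_rpow h₀.le (by positivity),
          ← mul_rpow h₀.le (by positivity)]
        field_simp
        ring_nf

lemma rpow_add_mul_add_le_s17 {a₀ a₁ b₀ b₁ : ℝ} (ha₀ : 0 ≤ a₀) (ha₁ : 0 ≤ a₁) (hb₀ : 0 ≤ b₀)
    (hb₁ : 0 ≤ b₁) :
    ((a₀ + a₁) * (b₀ + b₁)) ^ γ ≤
      max ((a₀ * b₀) ^ γ) ((a₁ * b₁) ^ γ) + (a₀ * b₁) ^ γ + (a₁ * b₀) ^ γ := by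
  rcases le_total (a₁ * b₁) (a₀ * b₀) with h | h
  · linarith [rpow_add_mul_add_le_of_mul_le_s17 ha₀ ha₁ hb₀ hb₁ h,
      le_max_left ((a₀ * b₀) ^ γ) ((a₁ * b₁) ^ γ)]
  · have := rpow_add_mul_add_le_of_mul_le_s17 ha₁ ha₀ hb₁ hb₀ h
    rw [add_comm a₁, add_comm b₁] at this
    linarith [le_max_right ((a₀ * b₀) ^ γ) ((a₁ * b₁) ^ γ)]

lemma add_pair_zero_eq_union_image {α : Type*} [AddZeroClass α] [DecidableEq α] (S : Finset α)
    (c : α) :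
    S + {0, c} = S ∪ S.image (· + c) := by
  ext x
  simp only [mem_add, mem_insert, mem_singleton, mem_union, mem_image]
  constructor
  · rintro ⟨y, hy, b, rfl | rfl, rfl⟩
    exacts [.inl (by simpa using hy), .inr ⟨y, hy, rfl⟩]
  · rintro (hx | ⟨y, hy, rfl⟩)
    exacts [⟨x, hx, 0, .inl rfl, add_zero x⟩, ⟨y, hy, c, .inr rfl, rfl⟩]

lemma card_pair_zero_sub_le {α : Type*} [AddGroup α] [DecidableEq α] (c : α) :
    #(({0, c} : Finset α) - {0, c}) ≤ 3 :=
  calc _ ≤ #({0, -c, c} : Finset α) := card_le_card (by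
        intro z hz
        obtain ⟨a, ha, b, hb, rfl⟩ := mem_sub.1 hz
        simp only [mem_insert, mem_singleton] at ha hb
        rcases ha with rfl | rfl <;> rcases hb with rfl | rfl <;> simp)
    _ ≤ 3 := card_le_three

lemma exists_split_of_subset_union_image {α : Type*} [Add α] [IsRightCancelAdd α] [DecidableEq α]
    {S A : Finset α} {c : α}
    (hdisj : Disjoint S (S.image (· + c))) (hA : A ⊆ S ∪ S.image (· + c)) :
    ∃ A₀ ⊆ S, ∃ A₁ ⊆ S, A = A₀ ∪ A₁.image (· + c) ∧ #A = #A₀ + #A₁ := by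
  refine ⟨S.filter (· ∈ A), filter_subset _ _, S.filter (· + c ∈ A), filter_subset _ _, ?_⟩
  have hA_eq : A = S.filter (· ∈ A) ∪ (S.filter (· + c ∈ A)).image (· + c) := by
    ext x
    constructor
    · intro hx
      rcases mem_union.1 (hA hx) with h | h
      · exact mem_union_left _ (mem_filter.2 ⟨h, hx⟩)
      · obtain ⟨y, hy, rfl⟩ := mem_image.1 h
        exact mem_union_right _ (mem_image_of_mem _ (mem_filter.2 ⟨hy, hx⟩))
    · intro hx
      rcases mem_union.1 hx with h | h
      · exact (mem_filter.1 h).2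
      · obtain ⟨y, hy, rfl⟩ := mem_image.1 h
        exact (mem_filter.1 hy).2
  refine ⟨hA_eq, ?_⟩
  conv_lhs => rw [hA_eq]
  rw [card_union_of_disjoint
      (hdisj.mono (filter_subset _ _) (image_subset_image (filter_subset _ _))),
    card_image_of_injective _ (add_left_injective c)]

lemma card_sub_union_image_ge {h c : ℝ} (hc : 2 * h < c) {A₀ A₁ B₀ B₁ : Finset ℝ}
    (hA₀ : ↑A₀ ⊆ Set.Icc 0 h) (hA₁ : ↑A₁ ⊆ Set.Icc 0 h) (hB₀ : ↑B₀ ⊆ Set.Icc 0 h)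
    (hB₁ : ↑B₁ ⊆ Set.Icc 0 h) :
    max #(A₀ - B₀) #(A₁ - B₁) + #(A₀ - B₁) + #(A₁ - B₀) ≤
      #((A₀ ∪ A₁.image (· + c)) - (B₀ ∪ B₁.image (· + c))) := by
  have bound : ∀ {X Y : Finset ℝ}, ↑X ⊆ Set.Icc 0 h → ↑Y ⊆ Set.Icc 0 h →
      ∀ z ∈ X - Y, -h ≤ z ∧ z ≤ h := by
    intro X Y hX hY z hz
    obtain ⟨x, hx, y, hy, rfl⟩ := mem_sub.1 hz
    obtain ⟨hx₀, hx₁⟩ := hX hx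
    obtain ⟨hy₀, hy₁⟩ := hY hy
    constructor <;> linarith
  -- the differences fall into three disjoint blocks, centred at `-c`, `0` and `c`
  set P := (A₀ - B₀) ∪ (A₁ - B₁)
  set Q := (A₀ - B₁).image (· - c)
  set R := (A₁ - B₀).image (· + c)
  have hP : ∀ z ∈ P, -h ≤ z ∧ z ≤ h := fun z hz =>
    (mem_union.1 hz).elim (bound hA₀ hB₀ z) (bound hA₁ hB₁ z)
  have hQ : ∀ z ∈ Q, -h - c ≤ z ∧ z ≤ h - c := by
    intro z hz
    obtain ⟨w, hw, rfl⟩ := mem_image.1 hz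
    have := bound hA₀ hB₁ w hw
    constructor <;> linarith
  have hR : ∀ z ∈ R, c - h ≤ z := by
    intro z hz
    obtain ⟨w, hw, rfl⟩ := mem_image.1 hz
    linarith [bound hA₁ hB₀ w hw]
  have hPQ : Disjoint P Q := disjoint_left.2 fun z hzP hzQ => by
    linarith [hP z hzP, (hQ z hzQ).2]
  have hPQR : Disjoint (P ∪ Q) R := disjoint_left.2 fun z hz hzR => by
    rcases mem_union.1 hz with hzP | hzQ
    · linarith [hP z hzP, hR z hzR]
    · linarith [hQ z hzQ, hR z hzR]
  have hsub : P ∪ Q ∪ R ⊆ (A₀ ∪ A₁.image (· + c)) - (B₀ ∪ B₁.image (· + c)) := by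
    refine union_subset (union_subset (union_subset ?_ ?_) ?_) ?_
    · exact sub_subset_sub subset_union_left subset_union_left
    · rintro _ hz
      obtain ⟨a, ha, b, hb, rfl⟩ := mem_sub.1 hz
      exact mem_sub.2 ⟨a + c, mem_union_right _ (mem_image_of_mem _ ha),
        b + c, mem_union_right _ (mem_image_of_mem _ hb), by ring⟩
    · rintro _ hz
      obtain ⟨_, hw, rfl⟩ := mem_image.1 hz
      obtain ⟨a, ha, b, hb, rfl⟩ := mem_sub.1 hw
      exact mem_sub.2 ⟨a, mem_union_left _ ha,
        b + c, mem_union_right _ (mem_image_of_mem _ hb), by ring⟩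
    · rintro _ hz
      obtain ⟨_, hw, rfl⟩ := mem_image.1 hz
      obtain ⟨a, ha, b, hb, rfl⟩ := mem_sub.1 hw
      exact mem_sub.2 ⟨a + c, mem_union_right _ (mem_image_of_mem _ ha),
        b, mem_union_left _ hb, by ring⟩
  calc max #(A₀ - B₀) #(A₁ - B₁) + #(A₀ - B₁) + #(A₁ - B₀) ≤ #P + #Q + #R := by
        rw [card_image_of_injective _ (sub_left_injective (b := c)),
          card_image_of_injective _ (add_left_injective c)]
        gcongr
        exact max_le (card_le_card subset_union_left) (card_le_card subset_union_right)
    _ = #(P ∪ Q ∪ R) := by rw [card_union_of_disjoint hPQR, card_union_of_disjoint hPQ]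
    _ ≤ _ := card_le_card hsub

-- `{∑ i ∈ s, 3 ^ i | s ⊆ range m}`: the numbers with `m` ternary digits, all of them `0` or `1`
noncomputable def ternaryCube : ℕ → Finset ℝ
  | 0 => {0}
  | m + 1 => ternaryCube m + {0, 3 ^ m}

lemma ternaryCube_succ (m : ℕ) :
    ternaryCube (m + 1) = ternaryCube m ∪ (ternaryCube m).image (· + 3 ^ m) :=
  add_pair_zero_eq_union_image _ _

lemma ternaryCube_subset_Icc (m : ℕ) : ↑(ternaryCube m) ⊆ Set.Icc (0 : ℝ) ((3 ^ m - 1) / 2) := by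
  induction m with
  | zero => simp [ternaryCube]
  | succ m ih =>
    rw [ternaryCube_succ, coe_union]
    refine Set.union_subset (ih.trans (Set.Icc_subset_Icc le_rfl ?_)) ?_
    · rw [pow_succ]; linarith [one_le_pow₀ (M₀ := ℝ) (a := 3) (by norm_num) (n := m)]
    · rintro _ hx
      obtain ⟨y, hy, rfl⟩ := mem_image.1 hx
      obtain ⟨hy₀, hy₁⟩ := ih hy
      rw [Set.mem_Icc, pow_succ]
      constructor <;> linarith [one_le_pow₀ (M₀ := ℝ) (a := 3) (by norm_num) (n := m)]

lemma disjoint_ternaryCube_image (m : ℕ) :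
    Disjoint (ternaryCube m) ((ternaryCube m).image (· + 3 ^ m)) := by
  refine disjoint_left.2 fun x hx hx' => ?_
  obtain ⟨y, hy, rfl⟩ := mem_image.1 hx'
  obtain ⟨-, hx₁⟩ := ternaryCube_subset_Icc m hx
  obtain ⟨hy₀, -⟩ := ternaryCube_subset_Icc m hy
  linarith [pow_pos (three_pos (α := ℝ)) m]

lemma card_ternaryCube (m : ℕ) : #(ternaryCube m) = 2 ^ m := by
  induction m with
  | zero => simp [ternaryCube]
  | succ m ih =>
    rw [ternaryCube_succ, card_union_of_disjoint (disjoint_ternaryCube_image m),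
      card_image_of_injective _ (add_left_injective _), ih, pow_succ, mul_two]

lemma card_ternaryCube_sub_le (m : ℕ) : #(ternaryCube m - ternaryCube m) ≤ 3 ^ m := by
  induction m with
  | zero => simp [ternaryCube]
  | succ m ih =>
    rw [ternaryCube, add_sub_add_comm, pow_succ]
    exact card_add_le.trans (Nat.mul_le_mul ih (card_pair_zero_sub_le _))

theorem rpow_card_mul_card_le_card_sub_s17 (m : ℕ) {A B : Finset ℝ} (hA : A ⊆ ternaryCube m)
    (hB : B ⊆ ternaryCube m) : ((#A : ℝ) * #B) ^ γ ≤ #(A - B) := by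
  induction m generalizing A B with
  | zero =>
    have hγ : γ ≠ 0 := (logb_pos (by norm_num) (by norm_num)).ne'
    rcases subset_singleton_iff.1 hA with rfl | rfl <;>
      rcases subset_singleton_iff.1 hB with rfl | rfl <;> simp [hγ]
  | succ m ih =>
    rw [ternaryCube_succ] at hA hB
    obtain ⟨A₀, hA₀, A₁, hA₁, rfl, hcardA⟩ :=
      exists_split_of_subset_union_image (disjoint_ternaryCube_image m) hA
    obtain ⟨B₀, hB₀, B₁, hB₁, rfl, hcardB⟩ :=
      exists_split_of_subset_union_image (disjoint_ternaryCube_image m) hB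
    have hIcc {X : Finset ℝ} (hX : X ⊆ ternaryCube m) : ↑X ⊆ Set.Icc (0 : ℝ) ((3 ^ m - 1) / 2) :=
      (coe_subset.2 hX).trans (ternaryCube_subset_Icc m)
    have hsplit := card_sub_union_image_ge (c := 3 ^ m) (by linarith) (hIcc hA₀) (hIcc hA₁)
      (hIcc hB₀) (hIcc hB₁)
    calc ((#(A₀ ∪ A₁.image (· + 3 ^ m)) : ℝ) * #(B₀ ∪ B₁.image (· + 3 ^ m))) ^ γ
        = ((#A₀ + #A₁) * (#B₀ + #B₁) : ℝ) ^ γ := by rw [hcardA, hcardB]; push_cast; rfl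
      _ ≤ max ((#A₀ * #B₀ : ℝ) ^ γ) ((#A₁ * #B₁ : ℝ) ^ γ) + (#A₀ * #B₁ : ℝ) ^ γ +
            (#A₁ * #B₀ : ℝ) ^ γ := rpow_add_mul_add_le_s17 (by positivity) (by positivity)
              (by positivity) (by positivity)
      _ ≤ max (#(A₀ - B₀) : ℝ) #(A₁ - B₁) + #(A₀ - B₁) + #(A₁ - B₀) := by
        gcongr
        exacts [ih hA₀ hB₀, ih hA₁ hB₁, ih hA₀ hB₁, ih hA₁ hB₀]
      _ ≤ _ := by exact_mod_cast hsplit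

noncomputable def distances {E : Type*} [PseudoMetricSpace E] [DecidableEq E] (S : Finset E) :
    Finset ℝ :=
  ((S ×ˢ S).filter (fun q => q.1 ≠ q.2)).image (fun q => dist q.1 q.2)

lemma _root_.Isometry.distances_image {F E : Type*} [MetricSpace F] [MetricSpace E]
    [DecidableEq F] [DecidableEq E]
    {f : F → E} (hf : Isometry f) (S : Finset F) : distances (S.image f) = distances S := by
  ext d
  simp only [distances, mem_image, mem_filter, mem_product, Prod.exists]
  constructor
  · rintro ⟨_, _, ⟨⟨⟨x, hx, rfl⟩, ⟨y, hy, rfl⟩⟩, hxy⟩, rfl⟩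
    exact ⟨x, y, ⟨⟨hx, hy⟩, fun h => hxy (h ▸ rfl)⟩, (hf.dist_eq x y).symm⟩
  · rintro ⟨x, y, ⟨⟨hx, hy⟩, hxy⟩, rfl⟩
    exact ⟨f x, f y, ⟨⟨⟨x, hx, rfl⟩, ⟨y, hy, rfl⟩⟩, hf.injective.ne hxy⟩, hf.dist_eq x y⟩

lemma card_distances_le_card_sub (A : Finset ℝ) : #(distances A) ≤ #(A - A) := by
  refine (card_le_card fun d hd => ?_).trans (card_image_le (f := abs))
  obtain ⟨⟨x, y⟩, hxy, rfl⟩ := mem_image.1 hd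
  obtain ⟨hx, hy⟩ := mem_product.1 (mem_filter.1 hxy).1
  exact mem_image.2 ⟨x - y, mem_sub.2 ⟨x, hx, y, hy, rfl⟩, (dist_eq x y).symm⟩

lemma card_sub_le_two_mul_card_distances_add_one (A : Finset ℝ) :
    #(A - A) ≤ 2 * #(distances A) + 1 := by
  have hsub : A - A ⊆ insert 0 (distances A ∪ -distances A) := by
    intro z hz
    obtain ⟨x, hx, y, hy, rfl⟩ := mem_sub.1 hz
    rcases eq_or_ne x y with rfl | hxy
    · exact mem_insert.2 (.inl (sub_self x))
    have hd : |x - y| ∈ distances A :=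
      mem_image.2 ⟨(x, y), mem_filter.2 ⟨mem_product.2 ⟨hx, hy⟩, hxy⟩, dist_eq x y⟩
    refine mem_insert_of_mem ?_
    rcases abs_choice (x - y) with h | h
    · exact mem_union_left _ (h ▸ hd)
    · exact mem_union_right _ (mem_neg.2 ⟨_, hd, by rw [h, neg_neg]⟩)
  calc #(A - A) ≤ #(insert 0 (distances A ∪ -distances A)) := card_le_card hsub
    _ ≤ #(distances A) + #(-distances A) + 1 :=
      (card_insert_le _ _).trans (by gcongr; exact card_union_le _ _)
    _ = 2 * #(distances A) + 1 := by rw [card_neg]; ring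

lemma two_pow_rpow_logb_two_three (m : ℕ) : ((2 ^ m : ℕ) : ℝ) ^ logb 2 3 = 3 ^ m := by
  rw [Nat.cast_pow, Nat.cast_ofNat, ← rpow_natCast, ← rpow_mul (by norm_num), mul_comm,
    rpow_mul (by norm_num), rpow_logb (by norm_num) (by norm_num) (by norm_num), rpow_natCast]

lemma mul_self_rpow_logb_four_three {x : ℝ} (hx : 0 ≤ x) : (x * x) ^ γ = x ^ logb 2 3 := by
  rw [← pow_two, ← rpow_two, ← rpow_mul hx]
  congr 1
  rw [logb, logb, show (4 : ℝ) = 2 ^ 2 by norm_num, log_pow]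
  field_simp
  norm_num

end

theorem stmt_17_general (n k m : ℕ) (hn : n = 2 ^ m) :
    ∃ S : Finset (EuclideanSpace ℝ (Fin 2)), S.card = n ∧
      (((((S ×ˢ S).filter (fun q => q.1 ≠ q.2)).image
          (fun q => dist q.1 q.2)).card : ℝ) ≤ (n : ℝ) ^ Real.logb 2 3) ∧
      ∀ T ⊆ S, T.card = k →
        (((((T ×ˢ T).filter (fun q => q.1 ≠ q.2)).image
            (fun q => dist q.1 q.2)).card : ℝ) ≥ (k : ℝ) ^ Real.logb 2 3 / 2 - 1) := by
  subst hn
  obtain ⟨f, hf⟩ : ∃ f : ℝ → EuclideanSpace ℝ (Fin 2), Isometry f :=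
    ⟨_, (LinearIsometry.toSpanSingleton ℝ _ (v := EuclideanSpace.single 0 1) (by simp)).isometry⟩
  refine ⟨(ternaryCube m).image f, by rw [card_image_of_injective _ hf.injective,
    card_ternaryCube], ?_, fun T hT hTk => ?_⟩
  · change (#(distances _) : ℝ) ≤ _
    rw [hf.distances_image, two_pow_rpow_logb_two_three]
    exact_mod_cast (card_distances_le_card_sub _).trans (card_ternaryCube_sub_le m)
  · obtain ⟨B, hB, rfl⟩ := subset_image_iff.1 hT
    change (#(distances _) : ℝ) ≥ _
    rw [hf.distances_image]
    rw [card_image_of_injective _ hf.injective] at hTk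
    have hlower := rpow_card_mul_card_le_card_sub_s17 m hB hB
    rw [hTk, mul_self_rpow_logb_four_three k.cast_nonneg] at hlower
    have hupper : (#(B - B) : ℝ) ≤ 2 * #(distances B) + 1 := by
      exact_mod_cast card_sub_le_two_mul_card_distances_add_one B
    linarith

theorem stmt_17 (n k m : ℕ) (hn : n = 2 ^ m) (hk : 0 < k) (hkn : k ≤ n) :
    ∃ S : Finset (EuclideanSpace ℝ (Fin 2)), S.card = n ∧
      (((((S ×ˢ S).filter (fun q => q.1 ≠ q.2)).image
          (fun q => dist q.1 q.2)).card : ℝ) ≤ (n : ℝ) ^ Real.logb 2 3) ∧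
      ∀ T ⊆ S, T.card = k →
        (((((T ×ˢ T).filter (fun q => q.1 ≠ q.2)).image
            (fun q => dist q.1 q.2)).card : ℝ) ≥ (k : ℝ) ^ Real.logb 2 3 / 2 - 1) :=
  stmt_17_general n k m hn
end
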